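/- arXiv:1912.07070 — 6 statements merged into one kernel-verified Lean document; each statement's English description precedes it below -/
import Mathlib

section
/- The balanced hypercube BH_n is vertex-transitive: for any two vertices u, v of BH_n there exists a graph automorphism of BH_n mapping u to v. -/
/-!
Write `σ(x) = ±1` according to the parity of `x ∈ ℤ/4`, so that `σ` is a homomorphism
`(ℤ/4, +) → {±1}`. For `c ∈ (ℤ/4)ⁿ` the affine map `a ↦ ε ⊙ a + c`, where `ε₀ = 1` and
`εⱼ = σ(c₀)` for `j ≠ 0`, sends an edge at `a` to an edge at its image: the inner coordinate is
translated by `c₀`, and the outer step `σ(a₀)` becomes `σ(c₀) σ(a₀) = σ(a₀ + c₀)`, which is the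
outer step at the image. Its inverse is a map of the same kind, and since `ε` only depends on
`c₀` one can choose `c` to send any `u` to any `v`.
-/

open SimpleGraph

/-- One step of the balanced-hypercube adjacency relation. -/
def bhRel (n : ℕ) (u v : Fin n → ZMod 4) : Prop :=
  ∃ (hn : 0 < n) (s : ZMod 4), (s = 1 ∨ s = -1) ∧
    (v = Function.update u ⟨0, hn⟩ (u ⟨0, hn⟩ + s) ∨
      ∃ i : Fin n, i ≠ ⟨0, hn⟩ ∧
        v = Function.update (Function.update u ⟨0, hn⟩ (u ⟨0, hn⟩ + s)) i
              (u i + (if Even (u ⟨0, hn⟩).val then 1 else -1)))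

/-- The balanced hypercube `BH n` on vertex set `{0,1,2,3}^n`. -/
def BH (n : ℕ) : SimpleGraph (Fin n → ZMod 4) :=
  SimpleGraph.fromRel (bhRel n)

/-- A vertex is white if its inner index is even. -/
def IsWhite {n : ℕ} (hn : 0 < n) (u : Fin n → ZMod 4) : Prop :=
  Even (u ⟨0, hn⟩).val

/-- A vertex is black if its inner index is odd. -/
def IsBlack {n : ℕ} (hn : 0 < n) (u : Fin n → ZMod 4) : Prop :=
  Odd (u ⟨0, hn⟩).val

namespace SimpleGraph

variable {V W : Type*} {r : V → V → Prop} {s : W → W → Prop}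

theorem fromRel_adj_map {f : V → W} (hf : Function.Injective f)
    (hrel : ∀ a b, r a b → s (f a) (f b)) {a b : V} (h : (fromRel r).Adj a b) :
    (fromRel s).Adj (f a) (f b) := by
  obtain ⟨hne, hab | hba⟩ := (fromRel_adj r a b).1 h
  · exact (fromRel_adj s _ _).2 ⟨hf.ne hne, Or.inl (hrel _ _ hab)⟩
  · exact (fromRel_adj s _ _).2 ⟨hf.ne hne, Or.inr (hrel _ _ hba)⟩

def fromRelIso (e : V ≃ W) (he : ∀ a b, r a b → s (e a) (e b))
    (he' : ∀ a b, s a b → r (e.symm a) (e.symm b)) : fromRel r ≃g fromRel s where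
  toEquiv := e
  map_rel_iff' {a b} := by
    refine ⟨fun h => ?_, fromRel_adj_map e.injective he⟩
    simpa using fromRel_adj_map e.symm.injective he' h

end SimpleGraph

def parSign (x : ZMod 4) : ZMod 4 := if Even x.val then 1 else -1

theorem parSign_add : ∀ x y : ZMod 4, parSign (x + y) = parSign x * parSign y := by decide

theorem parSign_neg : ∀ x : ZMod 4, parSign (-x) = parSign x := by decide

theorem parSign_mul_self : ∀ x : ZMod 4, parSign x * parSign x = 1 := by decide

section Affine

variable {n : ℕ} (hn : 0 < n)

def bhScale (c : Fin n → ZMod 4) (j : Fin n) : ZMod 4 :=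
  if j = ⟨0, hn⟩ then 1 else parSign (c ⟨0, hn⟩)

def bhAffine (c a : Fin n → ZMod 4) : Fin n → ZMod 4 :=
  fun j => bhScale hn c j * a j + c j

def bhAffineInvShift (c : Fin n → ZMod 4) : Fin n → ZMod 4 :=
  fun j => -(bhScale hn c j * c j)

variable {hn}

theorem bhScale_zero (c : Fin n → ZMod 4) : bhScale hn c ⟨0, hn⟩ = 1 := if_pos rfl

theorem bhScale_of_ne (c : Fin n → ZMod 4) {j : Fin n} (hj : j ≠ ⟨0, hn⟩) :
    bhScale hn c j = parSign (c ⟨0, hn⟩) := if_neg hj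

theorem bhScale_mul_self (c : Fin n → ZMod 4) (j : Fin n) :
    bhScale hn c j * bhScale hn c j = 1 := by
  unfold bhScale
  split_ifs
  · exact one_mul 1
  · exact parSign_mul_self _

theorem bhAffine_zero (c a : Fin n → ZMod 4) :
    bhAffine hn c a ⟨0, hn⟩ = a ⟨0, hn⟩ + c ⟨0, hn⟩ := by
  simp only [bhAffine, bhScale_zero, one_mul]

theorem bhAffine_update (c a : Fin n → ZMod 4) (i : Fin n) (x : ZMod 4) :
    bhAffine hn c (Function.update a i x) =
      Function.update (bhAffine hn c a) i (bhScale hn c i * x + c i) :=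
  funext fun j => Function.apply_update (fun j y => bhScale hn c j * y + c j) a i x j

theorem bhScale_bhAffineInvShift (c : Fin n → ZMod 4) :
    bhScale hn (bhAffineInvShift hn c) = bhScale hn c := by
  funext j
  simp only [bhScale, bhAffineInvShift, ↓reduceIte, one_mul, parSign_neg]

theorem bhAffineInvShift_involutive (c : Fin n → ZMod 4) :
    bhAffineInvShift hn (bhAffineInvShift hn c) = c := by
  funext j
  simp only [bhAffineInvShift, bhScale_bhAffineInvShift]
  linear_combination c j * bhScale_mul_self c j

theorem bhAffine_bhAffineInvShift (c a : Fin n → ZMod 4) :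
    bhAffine hn (bhAffineInvShift hn c) (bhAffine hn c a) = a := by
  funext j
  simp only [bhAffine, bhAffineInvShift, bhScale_bhAffineInvShift]
  linear_combination a j * bhScale_mul_self c j

theorem bhRel_bhAffine (c : Fin n → ZMod 4) {a b : Fin n → ZMod 4} (h : bhRel n a b) :
    bhRel n (bhAffine hn c a) (bhAffine hn c b) := by
  obtain ⟨_, s, hs, hb⟩ := h
  refine ⟨hn, s, hs, ?_⟩
  have hpar : ∀ x : ZMod 4, (if Even x.val then 1 else -1) = parSign x := fun _ => rfl
  rcases hb with rfl | ⟨i, hi, rfl⟩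
  · left
    rw [bhAffine_update, bhScale_zero, bhAffine_zero]
    ring_nf
  · right
    refine ⟨i, hi, ?_⟩
    have hstep : bhScale hn c i * parSign (a ⟨0, hn⟩) = parSign (a ⟨0, hn⟩ + c ⟨0, hn⟩) := by
      rw [bhScale_of_ne c hi, parSign_add, mul_comm]
    rw [bhAffine_update, bhAffine_update, bhScale_zero, bhAffine_zero]
    simp only [hpar, bhAffine, ← hstep]
    ring_nf

def bhAffineIso (c : Fin n → ZMod 4) : BH n ≃g BH n :=
  fromRelIso
    { toFun := bhAffine hn c
      invFun := bhAffine hn (bhAffineInvShift hn c)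
      left_inv := bhAffine_bhAffineInvShift c
      right_inv := fun a => by
        simpa only [bhAffineInvShift_involutive] using
          bhAffine_bhAffineInvShift (hn := hn) (bhAffineInvShift hn c) a }
    (fun _ _ => bhRel_bhAffine c) (fun _ _ => bhRel_bhAffine _)

theorem exists_bhAffine_eq (u v : Fin n → ZMod 4) : ∃ c, bhAffine hn c u = v := by
  let ε : Fin n → ZMod 4 := fun j => if j = ⟨0, hn⟩ then 1 else parSign (v ⟨0, hn⟩ - u ⟨0, hn⟩)
  let c : Fin n → ZMod 4 := fun j => v j - ε j * u j
  have hscale : bhScale hn c = ε := by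
    funext j
    simp only [bhScale, c, ε, ↓reduceIte, one_mul]
  refine ⟨c, funext fun j => ?_⟩
  simp only [bhAffine, hscale, c]
  ring

end Affine

/-- `BH n` is vertex-transitive. -/
theorem BH_vertexTransitive (n : ℕ) (hn : 1 ≤ n) (u v : Fin n → ZMod 4) :
    ∃ φ : BH n ≃g BH n, φ u = v := by
  obtain ⟨c, hc⟩ := exists_bhAffine_eq (hn := hn) u v
  exact ⟨bhAffineIso c, hc⟩
end

section
/- The balanced hypercube BH_n (n ≥ 1) is Hamiltonian laceable: for every black vertex u and every white vertex v, there exists a Hamiltonian path of BH_n from u to v. -/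
open SimpleGraph

/-!
Induct on `n`. `BH (n + 1)` consists of four copies ("layers") of `BH n`, indexed by the last
coordinate `j : ZMod 4`: besides the edges inside a layer, a white vertex `a` of layer `j` is joined
to the two black vertices `a ± e₀` of layer `j + 1`. For a black `u` in layer `j` and a white `v` in
layer `j + d`, take Hamiltonian paths of single layers from the induction hypothesis, cut some of
them just before a suitable vertex, and splice in excursions through the other layers along cross
edges. Running through consecutive layers `j, …, j + k` one after the other settles `d = 3` and
serves as the excursion for `d = 0` and `d = 1`; `d = 2` needs a route that goes back and forth.
The base case `BH 1` is the 4-cycle.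
-/

abbrev BHVertex (n : ℕ) := Fin n → ZMod 4

theorem SimpleGraph.Walk.IsHamiltonian.exists_adj_split {V : Type*} [DecidableEq V]
    {G : SimpleGraph V} {u v w : V} {p : G.Walk u v} (hp : p.IsHamiltonian) (hwu : w ≠ u) :
    ∃ (x : V) (q : G.Walk u x) (r : G.Walk w v), G.Adj x w ∧
      ∀ t, q.support.count t + r.support.count t = 1 := by
  obtain ⟨q, r, rfl⟩ := Walk.mem_support_iff_exists_append.mp (hp.mem_support w)
  have hq : ¬q.Nil := Walk.not_nil_of_ne hwu.symm
  refine ⟨_, q.dropLast, r, q.adj_penultimate hq, fun t => ?_⟩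
  rw [← hp t, Walk.support_append_eq_support_dropLast_append, Walk.support_dropLast hq,
    List.count_append]

theorem even_val_add_iff_not_even {s : ZMod 4} (hs : s = 1 ∨ s = -1) (x : ZMod 4) :
    Even (x + s).val ↔ ¬Even x.val := by
  revert x; rcases hs with rfl | rfl <;> decide

theorem even_val_add_two_iff (x : ZMod 4) : Even (x + 2).val ↔ Even x.val := by
  revert x; decide

theorem ZMod.eq_add_cases_four (x j : ZMod 4) : x = j ∨ x = j + 1 ∨ x = j + 2 ∨ x = j + 3 := by
  revert x j; decide

section Colour

variable {m : ℕ} {hm : 0 < m} {a b : BHVertex m}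

theorem isBlack_iff_not_isWhite : IsBlack hm a ↔ ¬IsWhite hm a :=
  Nat.not_even_iff_odd.symm

theorem isWhite_zero (hm : 0 < m) : IsWhite hm (0 : BHVertex m) := by
  simp [IsWhite]

theorem bhRel.exists_apply_zero (h : bhRel m a b) :
    ∃ s : ZMod 4, (s = 1 ∨ s = -1) ∧ b ⟨0, hm⟩ = a ⟨0, hm⟩ + s := by
  obtain ⟨_, s, hs, rfl | ⟨i, hi, rfl⟩⟩ := h
  · exact ⟨s, hs, by simp⟩
  · exact ⟨s, hs, by rw [Function.update_of_ne (Ne.symm hi)]; simp⟩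

theorem isWhite_iff_not_isWhite_of_adj (h : (BH m).Adj a b) : IsWhite hm b ↔ ¬IsWhite hm a := by
  rcases h.2 with h | h <;> obtain ⟨s, hs, hab⟩ := h.exists_apply_zero (hm := hm)
  · rw [IsWhite, hab, even_val_add_iff_not_even hs]; rfl
  · rw [IsWhite, IsWhite, hab, even_val_add_iff_not_even hs]; tauto

theorem IsBlack.isWhite_of_adj (hb : IsBlack hm b) (h : (BH m).Adj a b) : IsWhite hm a := by
  rw [isWhite_iff_not_isWhite_of_adj h.symm, ← isBlack_iff_not_isWhite]
  exact hb

theorem IsWhite.isBlack_of_adj (hb : IsWhite hm b) (h : (BH m).Adj a b) : IsBlack hm a := by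
  rw [isBlack_iff_not_isWhite, ← isWhite_iff_not_isWhite_of_adj h]
  exact hb

end Colour

def innerShift {m : ℕ} (hm : 0 < m) (a : BHVertex m) (s : ZMod 4) : BHVertex m :=
  Function.update a ⟨0, hm⟩ (a ⟨0, hm⟩ + s)

section InnerShift

variable {m : ℕ} {hm : 0 < m} {a : BHVertex m} {s : ZMod 4}

@[simp]
theorem innerShift_apply_zero : innerShift hm a s ⟨0, hm⟩ = a ⟨0, hm⟩ + s :=
  Function.update_self _ _ _

theorem IsWhite.isBlack_innerShift (ha : IsWhite hm a) (hs : s = 1 ∨ s = -1) :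
    IsBlack hm (innerShift hm a s) := by
  rw [isBlack_iff_not_isWhite, IsWhite, innerShift_apply_zero, even_val_add_iff_not_even hs]
  exact not_not.mpr ha

theorem IsBlack.isWhite_innerShift (ha : IsBlack hm a) (hs : s = 1 ∨ s = -1) :
    IsWhite hm (innerShift hm a s) := by
  rw [IsWhite, innerShift_apply_zero, even_val_add_iff_not_even hs]
  exact isBlack_iff_not_isWhite.mp ha

theorem IsBlack.isBlack_innerShift_two (ha : IsBlack hm a) : IsBlack hm (innerShift hm a 2) := by
  rw [isBlack_iff_not_isWhite, IsWhite, innerShift_apply_zero, even_val_add_two_iff]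
  exact isBlack_iff_not_isWhite.mp ha

theorem innerShift_ne (hm : 0 < m) (a : BHVertex m) (hs : s ≠ 0) : innerShift hm a s ≠ a :=
  fun h => hs <| add_eq_left.mp <| (innerShift_apply_zero (hm := hm)).symm.trans (congrFun h _)

theorem innerShift_one_ne_neg_one (hm : 0 < m) (a : BHVertex m) :
    innerShift hm a 1 ≠ innerShift hm a (-1) := fun h => by
  have := congrFun h ⟨0, hm⟩
  rw [innerShift_apply_zero, innerShift_apply_zero] at this
  revert this; generalize a ⟨0, hm⟩ = x; revert x; decide

theorem adj_innerShift (hm : 0 < m) (a : BHVertex m) (hs : s = 1 ∨ s = -1) :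
    (BH m).Adj a (innerShift hm a s) :=
  ⟨(innerShift_ne hm a (by rcases hs with rfl | rfl <;> decide)).symm, .inl ⟨hm, s, hs, .inl rfl⟩⟩

theorem exists_innerShift_ne (hm : 0 < m) (a b : BHVertex m) :
    ∃ s : ZMod 4, (s = 1 ∨ s = -1) ∧ innerShift hm a s ≠ b := by
  by_cases h : innerShift hm a 1 = b
  · exact ⟨-1, .inr rfl, h ▸ (innerShift_one_ne_neg_one hm a).symm⟩
  · exact ⟨1, .inl rfl, h⟩

end InnerShift

section Layers

variable {m : ℕ}

theorem bhRel_snoc {a b : BHVertex m} (h : bhRel m a b) (j : ZMod 4) :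
    bhRel (m + 1) (Fin.snoc a j) (Fin.snoc b j) := by
  obtain ⟨hm, s, hs, hab⟩ := h
  refine ⟨m.succ_pos, s, hs, ?_⟩
  have hzero : (⟨0, m.succ_pos⟩ : Fin (m + 1)) = Fin.castSucc ⟨0, hm⟩ := rfl
  rcases hab with rfl | ⟨i, hi, rfl⟩
  · left
    rw [hzero, Fin.snoc_castSucc, Fin.snoc_update]
  · right
    refine ⟨i.castSucc, hzero ▸ fun h => hi (Fin.castSucc_injective m h), ?_⟩
    rw [hzero, Fin.snoc_castSucc, Fin.snoc_castSucc, Fin.snoc_update, Fin.snoc_update]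

def layerHom (j : ZMod 4) : BH m →g BH (m + 1) where
  toFun a := Fin.snoc a j
  map_rel' := fun ⟨hne, hab⟩ =>
    ⟨fun h => hne (Fin.snoc_inj.mp h).1, hab.imp (bhRel_snoc · j) (bhRel_snoc · j)⟩

def liftWalk (j : ZMod 4) {a b : BHVertex m} (p : (BH m).Walk a b) :
    (BH (m + 1)).Walk (Fin.snoc a j) (Fin.snoc b j) :=
  p.map (layerHom j)

theorem support_liftWalk (j : ZMod 4) {a b : BHVertex m} (p : (BH m).Walk a b) :
    (liftWalk j p).support = p.support.map (Fin.snoc · j) :=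
  Walk.support_map _ _

theorem count_map_snoc (l : List (BHVertex m)) (j : ZMod 4) (w : BHVertex (m + 1)) :
    (l.map (Fin.snoc · j : BHVertex m → BHVertex (m + 1))).count w =
      if w (Fin.last m) = j then l.count (Fin.init w) else 0 := by
  split_ifs with h
  · rw [← Fin.snoc_init_self w, h, List.count_map_of_injective _ _ fun a b hab =>
      (Fin.snoc_inj.mp hab).1, Fin.init_snoc]
  · refine List.count_eq_zero.mpr fun hw => h ?_
    obtain ⟨a, -, rfl⟩ := List.mem_map.mp hw
    exact Fin.snoc_last _ _

theorem adj_snoc_innerShift (hm : 0 < m) (a : BHVertex m) (j : ZMod 4) {s : ZMod 4}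
    (hs : s = 1 ∨ s = -1) :
    (BH (m + 1)).Adj (Fin.snoc a j)
      (Fin.snoc (innerShift hm a s) (j + if Even (a ⟨0, hm⟩).val then 1 else -1)) := by
  have hzero : (⟨0, m.succ_pos⟩ : Fin (m + 1)) = Fin.castSucc ⟨0, hm⟩ := rfl
  refine ⟨fun h => (adj_innerShift hm a hs).ne (Fin.snoc_inj.mp h).1,
    .inl ⟨m.succ_pos, s, hs, .inr ⟨Fin.last m, ?_, ?_⟩⟩⟩
  · simp [Fin.ext_iff]; omega
  · rw [hzero, Fin.snoc_castSucc, Fin.snoc_last, ← Fin.snoc_update, Fin.update_snoc_last]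
    rfl

variable {hm : 0 < m} {a : BHVertex m} {s j j' : ZMod 4}

theorem IsWhite.adj_snoc_innerShift (ha : IsWhite hm a) (hs : s = 1 ∨ s = -1) (hj : j' = j + 1) :
    (BH (m + 1)).Adj (Fin.snoc a j) (Fin.snoc (innerShift hm a s) j') := by
  have heven : Even (a ⟨0, hm⟩).val := ha
  subst hj
  have := _root_.adj_snoc_innerShift hm a j hs
  rwa [if_pos heven] at this

theorem IsBlack.adj_snoc_innerShift (ha : IsBlack hm a) (hs : s = 1 ∨ s = -1) (hj : j' + 1 = j) :
    (BH (m + 1)).Adj (Fin.snoc a j) (Fin.snoc (innerShift hm a s) j') := by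
  have hodd : ¬Even (a ⟨0, hm⟩).val := isBlack_iff_not_isWhite.mp ha
  subst hj
  have := _root_.adj_snoc_innerShift hm a (j' + 1) hs
  rwa [if_neg hodd, add_neg_cancel_right] at this

end Layers

def BHLaceable (m : ℕ) (hm : 0 < m) : Prop :=
  ∀ u v : BHVertex m, IsBlack hm u → IsWhite hm v → ∃ p : (BH m).Walk u v, p.IsHamiltonian

theorem layerChain_count_succ {k : ℕ} (hk : k ≤ 2) (d : ZMod 4) :
    ((if d = 0 then 1 else 0) + if (d - 1).val ≤ k then 1 else 0) =
      if d.val ≤ k + 1 then 1 else 0 := by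
  revert d; interval_cases k <;> decide

namespace BHLaceable

variable {m : ℕ} {hm : 0 < m} {a b : BHVertex m}

/-- `p` visits every vertex of the layers `j, …, j + k` exactly once and no other vertex. -/
theorem exists_layerChain (IH : BHLaceable m hm) {k : ℕ} (hk : k ≤ 3) (j : ZMod 4)
    (ha : IsBlack hm a) (hb : IsWhite hm b) :
    ∃ p : (BH (m + 1)).Walk (Fin.snoc a j) (Fin.snoc b (j + k)),
      ∀ w, p.support.count w = if (w (Fin.last m) - j).val ≤ k then 1 else 0 := by
  induction k generalizing a j with
  | zero =>
    obtain ⟨p, hp⟩ := IH a b ha hb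
    refine ⟨(liftWalk j p).copy rfl (by simp), fun w => ?_⟩
    simp [support_liftWalk, count_map_snoc, sub_eq_zero, hp (Fin.init w)]
  | succ k ih =>
    have h0 := isWhite_zero hm
    obtain ⟨p, hp⟩ := IH a 0 ha h0
    obtain ⟨C, hC⟩ := ih (by omega) (j + 1) (h0.isBlack_innerShift (.inl rfl))
    refine ⟨((liftWalk j p).append (.cons (h0.adj_snoc_innerShift (.inl rfl) rfl) C)).copy rfl
      (by push_cast; ring_nf), fun w => ?_⟩
    simp only [Walk.support_copy, Walk.support_append, Walk.support_cons, List.tail_cons,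
      List.count_append, support_liftWalk, count_map_snoc, hC, hp (Fin.init w)]
    simpa only [sub_eq_zero, sub_sub] using
      layerChain_count_succ (k := k) (by omega) (w (Fin.last m) - j)

theorem exists_isHamiltonian_snoc_same (IH : BHLaceable m hm) (ha : IsBlack hm a)
    (hb : IsWhite hm b) (j : ZMod 4) :
    ∃ p : (BH (m + 1)).Walk (Fin.snoc a j) (Fin.snoc b j), p.IsHamiltonian := by
  obtain ⟨P, hP⟩ := IH a b ha hb
  have hc : IsBlack hm (innerShift hm a 2) := ha.isBlack_innerShift_two
  obtain ⟨x, q₁, q₂, hxc, hq⟩ := hP.exists_adj_split (innerShift_ne hm a (s := 2) (by decide))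
  have hx : IsWhite hm x := hc.isWhite_of_adj hxc
  obtain ⟨C, hC⟩ := IH.exists_layerChain (k := 2) (by norm_num) (j + 1)
    (hx.isBlack_innerShift (.inl rfl)) (hc.isWhite_innerShift (.inl rfl))
  refine ⟨(liftWalk j q₁).append <| .cons (hx.adj_snoc_innerShift (.inl rfl) rfl) <|
    C.append <| .cons (hc.adj_snoc_innerShift (.inl rfl) (by simp +decide [add_assoc])).symm <|
    liftWalk j q₂, fun w => ?_⟩
  simp only [Walk.support_append, Walk.support_cons, List.tail_cons, List.count_append,
    support_liftWalk, count_map_snoc]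
  rcases ZMod.eq_add_cases_four (w (Fin.last m)) j with hw | hw | hw | hw <;>
    simp +decide [hw, hC, hq (Fin.init w)]

theorem exists_isHamiltonian_snoc_add_one (IH : BHLaceable m hm) (ha : IsBlack hm a)
    (hb : IsWhite hm b) (j : ZMod 4) :
    ∃ p : (BH (m + 1)).Walk (Fin.snoc a j) (Fin.snoc b (j + 1)), p.IsHamiltonian := by
  have h0 := isWhite_zero hm
  obtain ⟨P, hP⟩ := IH a 0 ha h0
  have hc : IsBlack hm (innerShift hm a 2) := ha.isBlack_innerShift_two
  obtain ⟨x, q₁, q₂, hxc, hq⟩ := hP.exists_adj_split (innerShift_ne hm a (s := 2) (by decide))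
  have hx : IsWhite hm x := hc.isWhite_of_adj hxc
  obtain ⟨Q, hQ⟩ := IH _ b (hx.isBlack_innerShift (.inl rfl)) hb
  obtain ⟨s, hs, hys⟩ := exists_innerShift_ne hm 0 (innerShift hm x 1)
  obtain ⟨y, r₁, r₂, hyadj, hr⟩ := hQ.exists_adj_split hys
  have hy : IsWhite hm y := (h0.isBlack_innerShift hs).isWhite_of_adj hyadj
  obtain ⟨C, hC⟩ := IH.exists_layerChain (k := 1) (by norm_num) (j + 2)
    (hy.isBlack_innerShift (.inl rfl)) (hc.isWhite_innerShift (.inl rfl))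
  refine ⟨(liftWalk j q₁).append <| .cons (hx.adj_snoc_innerShift (.inl rfl) rfl) <|
    (liftWalk (j + 1) r₁).append <| .cons (hy.adj_snoc_innerShift (.inl rfl) (by ring)) <|
    C.append <| .cons (hc.adj_snoc_innerShift (.inl rfl) (by simp +decide [add_assoc])).symm <|
    (liftWalk j q₂).append <| .cons (h0.adj_snoc_innerShift hs rfl) <|
    liftWalk (j + 1) r₂, fun w => ?_⟩
  simp only [Walk.support_append, Walk.support_cons, List.tail_cons, List.count_append,
    support_liftWalk, count_map_snoc]
  rcases ZMod.eq_add_cases_four (w (Fin.last m)) j with hw | hw | hw | hw <;>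
    simp +decide [hw, hC, hq (Fin.init w), hr (Fin.init w)]

theorem exists_isHamiltonian_snoc_add_two (IH : BHLaceable m hm) (ha : IsBlack hm a)
    (hb : IsWhite hm b) (j : ZMod 4) :
    ∃ p : (BH (m + 1)).Walk (Fin.snoc a j) (Fin.snoc b (j + 2)), p.IsHamiltonian := by
  have h0 := isWhite_zero hm
  obtain ⟨P, hP⟩ := IH a 0 ha h0
  obtain ⟨x, q₁, q₂, hxadj, hq⟩ :=
    hP.exists_adj_split fun h => isBlack_iff_not_isWhite.mp ha (h ▸ h0)
  have hx : IsBlack hm x := h0.isBlack_of_adj hxadj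
  obtain ⟨Q, hQ⟩ := IH _ 0 (h0.isBlack_innerShift (.inl rfl)) h0
  obtain ⟨y, r₁, r₂, hyadj, hr⟩ := hQ.exists_adj_split (innerShift_one_ne_neg_one hm 0).symm
  have hy : IsWhite hm y := (h0.isBlack_innerShift (.inr rfl)).isWhite_of_adj hyadj
  obtain ⟨R, hR⟩ := IH _ b (hy.isBlack_innerShift (.inl rfl)) hb
  obtain ⟨s, hs, hzs⟩ := exists_innerShift_ne hm 0 (innerShift hm y 1)
  obtain ⟨z, t₁, t₂, hzadj, ht⟩ := hR.exists_adj_split hzs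
  have hz : IsWhite hm z := (h0.isBlack_innerShift hs).isWhite_of_adj hzadj
  obtain ⟨S, hS⟩ := IH _ _ (hz.isBlack_innerShift (.inl rfl)) (hx.isWhite_innerShift (.inl rfl))
  refine ⟨(liftWalk j q₁).append <|
    .cons (hx.adj_snoc_innerShift (.inl rfl) (by simp +decide [add_assoc])) <|
    (liftWalk (j + 3) S).reverse.append <|
    .cons (hz.adj_snoc_innerShift (.inl rfl) (by ring)).symm <|
    (liftWalk (j + 2) t₁).reverse.append <|
    .cons (hy.adj_snoc_innerShift (.inl rfl) (by ring)).symm <|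
    (liftWalk (j + 1) r₁).reverse.append <|
    .cons (h0.adj_snoc_innerShift (.inl rfl) rfl).symm <|
    (liftWalk j q₂).append <| .cons (h0.adj_snoc_innerShift (.inr rfl) rfl) <|
    (liftWalk (j + 1) r₂).append <| .cons (h0.adj_snoc_innerShift hs (by ring)) <|
    liftWalk (j + 2) t₂, fun w => ?_⟩
  simp only [Walk.support_append, Walk.support_cons, Walk.support_reverse, List.tail_cons,
    List.count_append, List.count_reverse, support_liftWalk, count_map_snoc]
  rcases ZMod.eq_add_cases_four (w (Fin.last m)) j with hw | hw | hw | hw <;>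
    simp +decide [hw, hq (Fin.init w), hr (Fin.init w), ht (Fin.init w), hS (Fin.init w)]

theorem exists_isHamiltonian_snoc_add_three (IH : BHLaceable m hm) (ha : IsBlack hm a)
    (hb : IsWhite hm b) (j : ZMod 4) :
    ∃ p : (BH (m + 1)).Walk (Fin.snoc a j) (Fin.snoc b (j + 3)), p.IsHamiltonian := by
  obtain ⟨C, hC⟩ := IH.exists_layerChain (k := 3) le_rfl j ha hb
  exact ⟨C, fun w => by simpa [hC] using Nat.le_of_lt_succ (ZMod.val_lt _)⟩

theorem succ (IH : BHLaceable m hm) : BHLaceable (m + 1) m.succ_pos := by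
  intro u v hu hv
  have ha : IsBlack hm (Fin.init u) := hu
  have hb : IsWhite hm (Fin.init v) := hv
  rw [← Fin.snoc_init_self u, ← Fin.snoc_init_self v]
  obtain h | h | h | h := ZMod.eq_add_cases_four (v (Fin.last m)) (u (Fin.last m)) <;> rw [h]
  · exact IH.exists_isHamiltonian_snoc_same ha hb _
  · exact IH.exists_isHamiltonian_snoc_add_one ha hb _
  · exact IH.exists_isHamiltonian_snoc_add_two ha hb _
  · exact IH.exists_isHamiltonian_snoc_add_three ha hb _

end BHLaceable

theorem ZMod.exists_cycle_of_odd_of_even {x y : ZMod 4} (hx : Odd x.val) (hy : Even y.val) :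
    ∃ s : ZMod 4, (s = 1 ∨ s = -1) ∧ x + s + s + s = y ∧
      ∀ t, [x, x + s, x + s + s, x + s + s + s].count t = 1 := by
  revert x y; decide

theorem bhLaceable_one : BHLaceable 1 one_pos := by
  intro u v hu hv
  have heval : Function.Injective fun u : BHVertex 1 => u ⟨0, one_pos⟩ :=
    fun x y h => funext fun i => by rwa [Subsingleton.elim i ⟨0, one_pos⟩]
  obtain ⟨s, hs, huv, hcount⟩ := ZMod.exists_cycle_of_odd_of_even hu hv
  let p := Walk.cons (adj_innerShift one_pos u hs) <| .cons (adj_innerShift one_pos _ hs) <|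
    .cons (adj_innerShift one_pos _ hs) .nil
  refine ⟨p.copy rfl (heval ?_), fun t => ?_⟩
  · simpa only [innerShift_apply_zero] using huv
  · rw [Walk.support_copy, ← List.count_map_of_injective _ _ heval]
    simpa only [p, Walk.support_cons, Walk.support_nil, List.map_cons, List.map_nil,
      innerShift_apply_zero] using hcount _

theorem bhLaceable (m : ℕ) (hm : 0 < m) : BHLaceable m hm := by
  induction m, hm using Nat.le_induction with
  | base => exact bhLaceable_one
  | succ m hm IH => exact IH.succ

/-- `BH n` is Hamiltonian laceable for `n ≥ 1`. -/
theorem BH_hamiltonian_laceable (n : ℕ) (hn : 1 ≤ n) (u v : Fin n → ZMod 4)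
    (hu : IsBlack (by omega) u) (hv : IsWhite (by omega) v) :
    ∃ p : (BH n).Walk u v, p.IsHamiltonian :=
  bhLaceable n hn u v hu hv
end

section
/- Every edge (u,v) of BH_n (n ≥ 2) lies on an 8-cycle C of BH_n such that for each i ∈ {0,1,2,3}, C contains exactly one edge lying inside the copy BH_{n-1}^i (the subgraph induced by vertices whose last coordinate equals i). -/
/-!
Orient the edge as `u → v = move s j u`: the inner index `a₀` moves by `s = ±1`, and possibly
one further coordinate `j` moves by `(-1)^{a₀}`. Alternate this move with a second one, with the
same `s`, that involves the last coordinate `d` exactly when the first does not. Since `a₀`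
advances by `s` at every step, the sign `(-1)^{a₀}` alternates, so each coordinate receives four
equal increments in ZMod 4 and the walk closes after eight steps. Already the projection
`w ↦ (w₀, w_d)` is injective on the vertices and edges of this walk, and `w_d` stays constant
exactly along the four moves not involving `d`, taking four different values there.
-/

open SimpleGraph

def alternate {α : Type*} (f g : α → α) : α → ℕ → α
  | x, 0 => x
  | x, k + 1 => alternate g f (f x) k

theorem adj_alternate {V : Type*} {G : SimpleGraph V} {f g : V → V}
    (hf : ∀ x, G.Adj x (f x)) (hg : ∀ x, G.Adj x (g x)) (x : V) (k : ℕ) :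
    G.Adj (alternate f g x k) (alternate f g x (k + 1)) := by
  induction k generalizing f g x with
  | zero => exact hf x
  | succ k ih => exact ih hg hf (f x)

theorem Function.Semiconj.alternate {α β : Type*} {π : α → β} {f g : α → α} {f' g' : β → β}
    (hf : Function.Semiconj π f f') (hg : Function.Semiconj π g g') (x : α) (k : ℕ) :
    π (alternate f g x k) = alternate f' g' (π x) k := by
  induction k generalizing f g f' g' x with
  | zero => rfl
  | succ k ih => simp only [_root_.alternate, ih hg hf, hf x]

namespace SimpleGraph.Walk

variable {V : Type*} {G : SimpleGraph V}

def ofSeq (f : ℕ → V) (h : ∀ k, G.Adj (f k) (f (k + 1))) : (k : ℕ) → G.Walk (f 0) (f k)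
  | 0 => nil
  | k + 1 => (ofSeq f h k).concat (h k)

variable (f : ℕ → V)

theorem length_ofSeq (h : ∀ k, G.Adj (f k) (f (k + 1))) (k : ℕ) : (ofSeq f h k).length = k := by
  induction k with
  | zero => rfl
  | succ k ih => rw [ofSeq, length_concat, ih]

theorem support_ofSeq (h : ∀ k, G.Adj (f k) (f (k + 1))) (k : ℕ) :
    (ofSeq f h k).support = (List.range (k + 1)).map f := by
  induction k with
  | zero => rfl
  | succ k ih => simp [ofSeq, ih, List.range_succ (n := k + 1)]

theorem edges_ofSeq (h : ∀ k, G.Adj (f k) (f (k + 1))) (k : ℕ) :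
    (ofSeq f h k).edges = (List.range k).map fun i => s(f i, f (i + 1)) := by
  induction k with
  | zero => rfl
  | succ k ih => simp [ofSeq, ih, List.range_succ]

theorem exists_isCycle_of_seq (h : ∀ k, G.Adj (f k) (f (k + 1))) {m : ℕ} (hm : m ≠ 0)
    (hclose : f m = f 0)
    (hsupport : ((List.range m).map fun k => f (k + 1)).Nodup)
    (hedges : ((List.range m).map fun k => s(f k, f (k + 1))).Nodup) :
    ∃ c : G.Walk (f 0) (f 0), c.IsCycle ∧ c.length = m ∧
      c.edges = (List.range m).map fun k => s(f k, f (k + 1)) := by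
  refine ⟨(ofSeq f h m).copy rfl hclose, ?_, by simp [length_ofSeq], by simp [edges_ofSeq]⟩
  rw [isCycle_def, isTrail_def, edges_copy, support_copy, edges_ofSeq, support_ofSeq,
    List.range_succ_eq_map]
  refine ⟨hedges, fun hnil => hm ?_, by simpa [Function.comp_def] using hsupport⟩
  simpa [length_ofSeq] using congrArg length hnil

end SimpleGraph.Walk

namespace BH

def sign (x : ZMod 4) : ZMod 4 := if Even x.val then 1 else -1

def shadowStep (s : ZMod 4) (rise : Bool) (x : ZMod 4 × ZMod 4) : ZMod 4 × ZMod 4 :=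
  (x.1 + s, if rise then x.2 + sign x.1 else x.2)

def shadowOrbit (s : ZMod 4) (r : Bool) : ZMod 4 × ZMod 4 → ℕ → ZMod 4 × ZMod 4 :=
  alternate (shadowStep s r) (shadowStep s !r)

variable {s : ZMod 4}

theorem alternate_shadowStep_eight (hs : s = 1 ∨ s = -1) (rE rO : Bool) (x : ZMod 4 × ZMod 4) :
    alternate (shadowStep s rE) (shadowStep s rO) x 8 = x := by
  rcases hs with rfl | rfl <;> revert rE rO x <;> decide

theorem nodup_shadowOrbit (hs : s = 1 ∨ s = -1) (r : Bool) (x : ZMod 4 × ZMod 4) :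
    ((List.range 8).map fun k => shadowOrbit s r x (k + 1)).Nodup := by
  rcases hs with rfl | rfl <;> revert r x <;> decide

theorem nodup_shadowOrbit_edges (hs : s = 1 ∨ s = -1) (r : Bool) (x : ZMod 4 × ZMod 4) :
    ((List.range 8).map fun k => s(shadowOrbit s r x k, shadowOrbit s r x (k + 1))).Nodup := by
  rcases hs with rfl | rfl <;> revert r x <;> decide

theorem length_filter_shadowOrbit_level (hs : s = 1 ∨ s = -1) (r : Bool) (x : ZMod 4 × ZMod 4)
    (i : ZMod 4) :
    ((List.range 8).filter fun k =>
      s((shadowOrbit s r x k).2, (shadowOrbit s r x (k + 1)).2) = s(i, i)).length = 1 := by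
  rcases hs with rfl | rfl <;> revert r x i <;> decide

variable {n : ℕ} [NeZero n]

/-- `none` moves only the inner index `a₀`; `some i` also moves `aᵢ` by `(-1)^{a₀}`. -/
def move (s : ZMod 4) : Option (Fin n) → (Fin n → ZMod 4) → (Fin n → ZMod 4)
  | none, w => Function.update w 0 (w 0 + s)
  | some i, w => Function.update (Function.update w 0 (w 0 + s)) i (w i + sign (w 0))

theorem move_apply_zero {j : Option (Fin n)} (hj : j ≠ some 0) (w : Fin n → ZMod 4) :
    move s j w 0 = w 0 + s := by
  cases j with
  | none => simp [move]
  | some i =>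
    have hi : (0 : Fin n) ≠ i := fun h => hj (h ▸ rfl)
    simp [move, Function.update_of_ne hi]

theorem move_apply_of_ne_zero (j : Option (Fin n)) (w : Fin n → ZMod 4) {p : Fin n}
    (hp : p ≠ 0) :
    move s j w p = if j = some p then w p + sign (w 0) else w p := by
  cases j with
  | none => simp [move, hp]
  | some i =>
    rcases eq_or_ne p i with rfl | hpi
    · simp [move]
    · simp [move, hp, hpi, Ne.symm hpi]

theorem adj_move (hs : s = 1 ∨ s = -1) {j : Option (Fin n)} (hj : j ≠ some 0)
    (w : Fin n → ZMod 4) : (BH n).Adj w (move s j w) := by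
  have hne : w ≠ move s j w := fun h => by
    have h0 := congrFun h 0
    rw [move_apply_zero hj, left_eq_add] at h0
    exact (by rcases hs with rfl | rfl <;> decide : s ≠ 0) h0
  refine (fromRel_adj _ _ _).mpr ⟨hne, Or.inl ⟨Nat.pos_of_neZero n, s, hs, ?_⟩⟩
  cases j with
  | none => exact Or.inl rfl
  | some i => exact Or.inr ⟨i, fun h => hj (h ▸ rfl), rfl⟩

theorem exists_move_of_bhRel {x y : Fin n → ZMod 4} (h : bhRel n x y) :
    ∃ s j, (s = 1 ∨ s = -1) ∧ j ≠ some 0 ∧ y = move s j x := by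
  obtain ⟨_, s, hs, rfl | ⟨i, hi, rfl⟩⟩ := h
  · exact ⟨s, none, hs, Option.some_ne_none _ |>.symm, rfl⟩
  · exact ⟨s, some i, hs, fun h => hi (Option.some_injective _ h), rfl⟩

theorem semiconj_move_shadowStep {j : Option (Fin n)} (hj : j ≠ some 0) {p : Fin n}
    (hp : p ≠ 0) :
    Function.Semiconj (fun w : Fin n → ZMod 4 => (w 0, w p)) (move s j)
      (shadowStep s (j = some p)) := by
  intro w
  change (move s j w 0, move s j w p) = _
  rw [move_apply_zero hj, move_apply_of_ne_zero j w hp]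
  by_cases h : j = some p <;> simp [shadowStep, h]

theorem exists_eight_cycle_through_move {d : Fin n} (hd : d ≠ 0) (hs : s = 1 ∨ s = -1)
    {j : Option (Fin n)} (hj : j ≠ some 0) (u : Fin n → ZMod 4) :
    ∃ c : (BH n).Walk u u, c.IsCycle ∧ c.length = 8 ∧ s(u, move s j u) ∈ c.edges ∧
      ∀ i : ZMod 4,
        (c.edges.filter (fun e => Sym2.map (fun w => w d) e = s(i, i))).length = 1 := by
  set j' : Option (Fin n) := if j = some d then none else some d
  have hj' : j' ≠ some 0 := by by_cases h : j = some d <;> simp [j', h, hd]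
  set f := alternate (move s j) (move s j') u
  have hf : ∀ k, (BH n).Adj (f k) (f (k + 1)) :=
    adj_alternate (adj_move hs hj) (adj_move hs hj') u
  have hshadow (p : Fin n) (hp : p ≠ 0) (k : ℕ) : (f k 0, f k p) =
      alternate (shadowStep s (j = some p)) (shadowStep s (j' = some p)) (u 0, u p) k :=
    (semiconj_move_shadowStep hj hp).alternate (semiconj_move_shadowStep hj' hp) u k
  have hrise : decide (j' = some d) = !decide (j = some d) := by
    by_cases h : j = some d <;> simp [j', h]
  have hd_orbit (k : ℕ) : (f k 0, f k d) = shadowOrbit s (j = some d) (u 0, u d) k := by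
    rw [hshadow d hd, hrise, shadowOrbit]
  have hclose : f 8 = u := by
    funext p
    rcases eq_or_ne p 0 with rfl | hp
    · exact congrArg Prod.fst ((hshadow d hd 8).trans (alternate_shadowStep_eight hs _ _ _))
    · exact congrArg Prod.snd ((hshadow p hp 8).trans (alternate_shadowStep_eight hs _ _ _))
  have hsupport : ((List.range 8).map fun k => f (k + 1)).Nodup := by
    refine .of_map (fun w => (w 0, w d)) ?_
    simpa only [List.map_map, Function.comp_def, hd_orbit] using
      nodup_shadowOrbit hs (j = some d) (u 0, u d)
  have hedges_nodup : ((List.range 8).map fun k => s(f k, f (k + 1))).Nodup := by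
    refine .of_map (Sym2.map fun w => (w 0, w d)) ?_
    simpa only [List.map_map, Function.comp_def, Sym2.map_mk, hd_orbit] using
      nodup_shadowOrbit_edges hs (j = some d) (u 0, u d)
  obtain ⟨c, hc, hlen, hedges⟩ :=
    Walk.exists_isCycle_of_seq f hf (m := 8) (by norm_num) hclose hsupport hedges_nodup
  have hfd (k : ℕ) : f k d = (shadowOrbit s (j = some d) (u 0, u d) k).2 :=
    congrArg Prod.snd (hd_orbit k)
  have hlevel (i : ZMod 4) :
      (c.edges.filter (fun e => Sym2.map (fun w => w d) e = s(i, i))).length = 1 := by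
    rw [hedges, List.filter_map, List.length_map]
    simpa only [Function.comp_def, Sym2.map_mk, hfd] using
      length_filter_shadowOrbit_level hs (j = some d) (u 0, u d) i
  exact ⟨c, hc, hlen, hedges ▸ List.mem_map.2 ⟨0, by simp, rfl⟩, hlevel⟩

end BH

/-- Every edge of `BH n` (`n ≥ 2`) lies on an 8-cycle having exactly one edge
inside each of the four copies `BH_{n-1}^i` (vertices whose last coordinate is `i`). -/
theorem BH_edge_in_eight_cycle (n : ℕ) (hn : 2 ≤ n) (u v : Fin n → ZMod 4)
    (huv : (BH n).Adj u v) :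
    ∃ c : (BH n).Walk u u, c.IsCycle ∧ c.length = 8 ∧ s(u, v) ∈ c.edges ∧
      ∀ i : ZMod 4,
        (c.edges.filter
          (fun e => Sym2.map (fun w => w ⟨n - 1, by omega⟩) e = s(i, i))).length = 1 := by
  have : NeZero n := ⟨by omega⟩
  set d : Fin n := ⟨n - 1, by omega⟩
  have hd : d ≠ 0 := by simp [d, Fin.ext_iff]; omega
  have key {x y : Fin n → ZMod 4} (h : bhRel n x y) : ∃ c : (BH n).Walk x x, c.IsCycle ∧
      c.length = 8 ∧ s(x, y) ∈ c.edges ∧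
      ∀ i : ZMod 4, (c.edges.filter (fun e => Sym2.map (fun w => w d) e = s(i, i))).length = 1 := by
    obtain ⟨s, j, hs, hj, rfl⟩ := BH.exists_move_of_bhRel h
    exact BH.exists_eight_cycle_through_move hd hs hj x
  rcases ((fromRel_adj _ _ _).mp huv).2 with h | h
  · exact key h
  · obtain ⟨c, hc, hlen, hvu, hlevel⟩ := key h
    have hu := c.snd_mem_support_of_mem_edges hvu
    refine ⟨c.rotate u hu, hc.rotate hu, by rw [Walk.length_rotate, hlen], ?_, fun i => ?_⟩
    · exact (c.rotate_edges u hu).mem_iff.mpr (Sym2.eq_swap ▸ hvu)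
    · rw [← hlevel i]
      exact ((c.rotate_edges u hu).perm.filter _).length_eq
end

section
/- For every black vertex s of BH_n with n ≥ 2, there exist two vertex-disjoint 4-cycles ⟨a_1,b_1,c_1,d_1⟩ and ⟨a_2,b_2,c_2,d_2⟩ in BH_n, where for t = 1,2 the vertices a_t and b_t are symmetric with c_t and d_t respectively, and for each t ∈ {1,2} there is a Hamiltonian cycle of BH_n containing the 5-vertex path ⟨s, a_t, b_t, c_t, d_t⟩. -/
/-!
Write a vertex of `BH (m + 1)` as `Fin.cons i x` with inner index `i` and outer part
`x ∈ (ZMod 4)^m`. The neighbours of `(i, x)` are `(i ± 1, x)` and `(i ± 1, x ± e_c)`, the sign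
of `e_c` being fixed by the parity of `i`. Hence `(i, x)` and its symmetric vertex `(i + 2, x)`
have the same neighbours, and every edge `a b` spans the 4-cycle `⟨a, b, a', b'⟩` through the
symmetric vertices.

Both Hamiltonian cycles lift a cyclic Gray code `γ` of `(ZMod 4)^m` whose steps add unit vectors:
each step of `γ` is spread over four steps of the inner index, in two different patterns, chosen
so that both cycles leave the black vertex `s = (i, x)` along a path `⟨s, a, b, a', b'⟩`. The first
4-cycle lies in the outer layers `x` and `x + γ 1`, the second in the layer `x - γ 1`, so they are
disjoint.
-/

open SimpleGraph

theorem Nat.modEq_mul_iff_modEq_and_div_modEq (a N j j' : ℕ) :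
    j ≡ j' [MOD a * N] ↔ j ≡ j' [MOD a] ∧ j / a ≡ j' / a [MOD N] := by
  rw [Nat.ModEq, Nat.ext_div_modEq_iff a, Nat.mod_mul_right_div_self,
    Nat.mod_mul_right_div_self, Nat.ModEq, Nat.mod_mul_right_mod, Nat.mod_mul_right_mod, and_comm]
  rfl

theorem List.map_range_isPrefix_map_range {α : Type*} (f : ℕ → α) {k n : ℕ} (h : k ≤ n) :
    (List.range k).map f <+: (List.range n).map f :=
  (List.prefix_iff_eq_take.2 (by rw [List.length_range, List.take_range, min_eq_left h])).map f

namespace SimpleGraph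

variable {V : Type*} {G : SimpleGraph V}

theorem Walk.adj_of_cons_cons_cons_isPrefix {v w u a b : V} {l : List V} {p : G.Walk v w}
    (h : u :: a :: b :: l <+: p.support) : G.Adj a b := by
  have := p.isChain_adj_support.prefix h
  simp only [List.isChain_cons_cons] at this
  exact this.2.1

theorem exists_isCycle_support_eq_of_adj {a b c d : V} (hab : G.Adj a b) (hbc : G.Adj b c)
    (hcd : G.Adj c d) (hda : G.Adj d a) (hac : a ≠ c) (hbd : b ≠ d) :
    ∃ C : G.Walk a a, C.IsCycle ∧ C.support = [a, b, c, d, a] := by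
  refine ⟨.cons hab (.cons hbc (.cons hcd (.cons hda .nil))), ?_, rfl⟩
  rw [Walk.isCycle_iff_isPath_tail_and_le_length]
  refine ⟨Walk.IsPath.mk' ?_, by simp⟩
  simp [hab.ne', hbc.ne, hcd.ne, hda.ne, hac.symm, hbd]

variable [DecidableEq V] [Fintype V]

theorem Walk.isHamiltonianCycle_of_nodup_support_tail {u : V} {p : G.Walk u u}
    (hV : 3 ≤ Fintype.card V) (hp : p.support.tail.Nodup) (hlen : p.length = Fintype.card V) :
    p.IsHamiltonianCycle := by
  have hnil : ¬p.Nil := fun h => by rw [h.length_eq_zero] at hlen; omega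
  refine isHamiltonianCycle_iff_isCycle_and_length_eq.2 ⟨?_, hlen⟩
  refine isCycle_iff_isPath_tail_and_le_length.2 ⟨?_, hlen ▸ hV⟩
  exact IsPath.mk' (p.support_tail_of_not_nil hnil ▸ hp)

theorem exists_isHamiltonianCycle_support_eq_map (f : ℕ → V) {u : V} (hu : f 0 = u)
    (hadj : ∀ j, G.Adj (f j) (f (j + 1))) (hf : ∀ i j, f i = f j ↔ i ≡ j [MOD Fintype.card V])
    (hV : 3 ≤ Fintype.card V) :
    ∃ H : G.Walk u u, H.IsHamiltonianCycle ∧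
      H.support = (List.range (Fintype.card V + 1)).map f := by
  subst hu
  set L := Fintype.card V
  have hchain : ((List.range (L + 1)).map f).IsChain G.Adj :=
    List.isChain_map f |>.2 <| (List.isChain_range_succ _ _).2 fun j _ => hadj j
  have hne : (List.range (L + 1)).map f ≠ [] := by simp
  have hlast : ((List.range (L + 1)).map f).getLast hne = f 0 := by
    simp [List.getLast_map, List.getLast_range, hf L 0, Nat.ModEq, L]
  let H : G.Walk (f 0) (f 0) := (Walk.ofSupport _ hne hchain).copy (by simp) hlast
  have hsupp : H.support = (List.range (L + 1)).map f := by simp [H]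
  refine ⟨H, Walk.isHamiltonianCycle_of_nodup_support_tail hV ?_ (by simp [H, L]), hsupp⟩
  rw [hsupp, List.range_succ_eq_map, List.map_cons, List.tail_cons, List.map_map]
  refine List.nodup_range.map_on fun a ha b hb hab => ?_
  rw [List.mem_range] at ha hb
  have := Nat.ModEq.add_right_cancel' 1 ((hf _ _).1 hab)
  rwa [Nat.ModEq, Nat.mod_eq_of_lt ha, Nat.mod_eq_of_lt hb] at this

end SimpleGraph

def digit4 (k t : ℕ) : ZMod 4 := ((t / 4 ^ k : ℕ) : ZMod 4)

-- Keeping the top digit unreduced makes `gray4 m` periodic of period `4 ^ m`. Incrementing `t`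
-- adds `1` to all digits up to the lowest one that does not wrap around, so exactly one
-- coordinate changes, by `+1`.
def gray4 (m t : ℕ) (k : Fin m) : ZMod 4 :=
  digit4 k t - if (k : ℕ) + 1 < m then digit4 (k + 1) t else 0

theorem digit4_succ (k t : ℕ) :
    digit4 k (t + 1) = digit4 k t + if 4 ^ k ∣ t + 1 then 1 else 0 := by
  rw [digit4, digit4, Nat.succ_div]
  push_cast
  split_ifs <;> simp

theorem digit4_add_pow_mul {k m : ℕ} (hk : k < m) (t q : ℕ) :
    digit4 k (t + 4 ^ m * q) = digit4 k t := by
  obtain ⟨d, rfl⟩ : ∃ d, m = k + d + 1 := ⟨m - k - 1, by omega⟩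
  rw [digit4, digit4, show 4 ^ (k + d + 1) * q = 4 * (4 ^ d * q) * 4 ^ k by ring,
    Nat.add_mul_div_right _ _ (by positivity)]
  push_cast
  rw [show (4 : ZMod 4) = 0 from rfl, zero_mul, add_zero]

theorem digit4_eq_zero_of_lt {k t : ℕ} (ht : t < 4 ^ k) : digit4 k t = 0 := by
  simp [digit4, Nat.div_eq_of_lt ht]

theorem eq_of_digit4_eq {m t t' : ℕ} (ht : t < 4 ^ m) (ht' : t' < 4 ^ m)
    (h : ∀ k < m, digit4 k t = digit4 k t') : t = t' := by
  have := finFunctionFinEquiv.symm.injective (a₁ := ⟨t, ht⟩) (a₂ := ⟨t', ht'⟩) <| by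
    funext k
    apply Fin.ext
    rw [finFunctionFinEquiv_symm_apply_val, finFunctionFinEquiv_symm_apply_val]
    exact (ZMod.natCast_eq_natCast_iff' _ _ 4).1 (h k k.isLt)
  simpa using this

theorem gray4_zero (m : ℕ) : gray4 m 0 = 0 := by
  funext k
  simp [gray4, digit4]

theorem gray4_add_pow_mul (m t q : ℕ) : gray4 m (t + 4 ^ m * q) = gray4 m t := by
  funext k
  simp only [gray4]
  split_ifs with hk
  · rw [digit4_add_pow_mul k.isLt, digit4_add_pow_mul hk]
  · rw [digit4_add_pow_mul k.isLt]

theorem gray4_mod (m t : ℕ) : gray4 m (t % 4 ^ m) = gray4 m t := by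
  conv_rhs => rw [← Nat.mod_add_div t (4 ^ m), gray4_add_pow_mul]

theorem gray4_of_lt {m t : ℕ} (ht : t < 4 ^ m) (k : Fin m) :
    gray4 m t k = digit4 k t - digit4 (k + 1) t := by
  rw [gray4]
  split_ifs with hk
  · rfl
  · rw [digit4_eq_zero_of_lt (k := k + 1)
      (ht.trans_le (Nat.pow_le_pow_right (by norm_num) (by omega)))]

theorem gray4_injOn {m t t' : ℕ} (ht : t < 4 ^ m) (ht' : t' < 4 ^ m)
    (h : gray4 m t = gray4 m t') : t = t' := by
  refine eq_of_digit4_eq ht ht' fun k hk => ?_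
  refine Nat.decreasingInduction (motive := fun k _ => digit4 k t = digit4 k t')
    (fun k hk ih => ?_) ?_ hk.le
  · have := congrFun h ⟨k, hk⟩
    rwa [gray4_of_lt ht, gray4_of_lt ht', ih, sub_left_inj] at this
  · rw [digit4_eq_zero_of_lt ht, digit4_eq_zero_of_lt ht']

theorem gray4_eq_iff {m t t' : ℕ} : gray4 m t = gray4 m t' ↔ t ≡ t' [MOD 4 ^ m] := by
  refine ⟨fun h => ?_, fun h => ?_⟩
  · rw [← gray4_mod m t, ← gray4_mod m t'] at h
    exact gray4_injOn (Nat.mod_lt _ (by positivity)) (Nat.mod_lt _ (by positivity)) h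
  · rw [← gray4_mod m t, ← gray4_mod m t', h]

theorem gray4_succ {m : ℕ} (hm : 0 < m) (t : ℕ) :
    ∃ c : Fin m, gray4 m (t + 1) = gray4 m t + Pi.single c 1 := by
  obtain ⟨c, hcm, hdvd⟩ : ∃ c < m, ∀ k < m, 4 ^ k ∣ t + 1 ↔ k ≤ c := by
    let P k := 4 ^ k ∣ t + 1
    refine ⟨Nat.findGreatest P (m - 1), by have := Nat.findGreatest_le (P := P) (m - 1); omega,
      fun k hk => ⟨Nat.le_findGreatest (P := P) (show k ≤ m - 1 by omega), fun hkc => ?_⟩⟩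
    exact (pow_dvd_pow 4 hkc).trans (Nat.findGreatest_spec (P := P) (Nat.zero_le _) (by simp [P]))
  refine ⟨⟨c, hcm⟩, funext fun k => ?_⟩
  have hk := hdvd k k.isLt
  have hk1 := hdvd (k + 1)
  simp only [gray4, digit4_succ, Pi.add_apply, Pi.single_apply, Fin.ext_iff]
  rcases lt_trichotomy (k : ℕ) c with h | h | h
  · have hk1m : (k : ℕ) + 1 < m := by omega
    rw [if_pos (hk.2 h.le), if_pos hk1m, if_pos ((hk1 hk1m).2 h), if_pos hk1m, if_neg h.ne]
    ring
  · rw [if_pos (hk.2 h.le), if_pos h]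
    split_ifs with h1 h2
    · exact absurd ((hk1 h1).1 h2) (by omega)
    · ring
    · ring
  · rw [if_neg (fun h' => by have := hk.1 h'; omega), if_neg h.ne']
    split_ifs with h1 h2
    · exact absurd ((hk1 h1).1 h2) (by omega)
    · ring
    · ring

theorem gray4_one_apply_zero {m : ℕ} (hm : 0 < m) : gray4 m 1 ⟨0, hm⟩ = 1 := by
  simp [gray4, digit4]

section BalancedHypercube

variable {m : ℕ}

theorem bhRel_cons_iff {i : ZMod 4} {x : Fin m → ZMod 4} {v : Fin (m + 1) → ZMod 4} :
    bhRel (m + 1) (Fin.cons i x) v ↔ ∃ σ : ZMod 4, (σ = 1 ∨ σ = -1) ∧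
      (v = Fin.cons (i + σ) x ∨
        ∃ c : Fin m, v = Fin.cons (i + σ) (x + Pi.single c (if Even i.val then 1 else -1))) := by
  have hupd : ∀ (c : Fin m) (ε : ZMod 4), Function.update x c (x c + ε) = x + Pi.single c ε := by
    intro c ε
    ext k
    by_cases hk : k = c <;> simp [hk]
  simp [bhRel, Fin.exists_fin_succ, ← Fin.cons_update, hupd]

theorem ne_of_bhRel {u v : Fin (m + 1) → ZMod 4} (h : bhRel (m + 1) u v) : u ≠ v := by
  rw [← Fin.cons_self_tail u, bhRel_cons_iff] at h
  obtain ⟨σ, hσ, rfl | ⟨c, rfl⟩⟩ := h <;>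
  · intro h
    have hσ0 : σ = 0 := by simpa using congrFun h 0
    rcases hσ with rfl | rfl <;> exact absurd hσ0 (by decide)

theorem BH_adj_iff {u v : Fin (m + 1) → ZMod 4} :
    (BH (m + 1)).Adj u v ↔ bhRel (m + 1) u v ∨ bhRel (m + 1) v u := by
  rw [BH, fromRel_adj]
  exact ⟨And.right, fun h => ⟨h.elim ne_of_bhRel fun h => (ne_of_bhRel h).symm, h⟩⟩

theorem BH_adj_cons_inner {i σ : ZMod 4} (hσ : σ = 1 ∨ σ = -1) (x : Fin m → ZMod 4) :
    (BH (m + 1)).Adj (Fin.cons i x) (Fin.cons (i + σ) x) :=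
  BH_adj_iff.2 <| .inl <| bhRel_cons_iff.2 ⟨σ, hσ, .inl rfl⟩

theorem BH_adj_cons_add_single {i σ : ZMod 4} (hi : Even i.val) (hσ : σ = 1 ∨ σ = -1)
    (x : Fin m → ZMod 4) (c : Fin m) :
    (BH (m + 1)).Adj (Fin.cons i x) (Fin.cons (i + σ) (x + Pi.single c 1)) :=
  BH_adj_iff.2 <| .inl <| bhRel_cons_iff.2 ⟨σ, hσ, .inr ⟨c, by simp [hi]⟩⟩

theorem BH_adj_cons_sub_single {i σ : ZMod 4} (hi : ¬Even i.val) (hσ : σ = 1 ∨ σ = -1)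
    (x : Fin m → ZMod 4) (c : Fin m) :
    (BH (m + 1)).Adj (Fin.cons i x) (Fin.cons (i + σ) (x - Pi.single c 1)) :=
  BH_adj_iff.2 <| .inl <| bhRel_cons_iff.2
    ⟨σ, hσ, .inr ⟨c, by simp [hi, sub_eq_add_neg, Pi.single_neg]⟩⟩

theorem bhRel_cons_add_two_left {i : ZMod 4} {x : Fin m → ZMod 4} {v : Fin (m + 1) → ZMod 4} :
    bhRel (m + 1) (Fin.cons (i + 2) x) v ↔ bhRel (m + 1) (Fin.cons i x) v := by
  have hsign : (if Even (i + 2).val then (1 : ZMod 4) else -1) = if Even i.val then 1 else -1 := by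
    revert i; decide
  have hflip : ∀ σ : ZMod 4, (σ = 1 ∨ σ = -1) →
      (-σ = 1 ∨ -σ = -1) ∧ i + 2 + -σ = i + σ ∧ i + -σ = i + 2 + σ := by
    revert i; decide
  rw [bhRel_cons_iff, bhRel_cons_iff, hsign]
  constructor <;> rintro ⟨σ, hσ, h⟩ <;> obtain ⟨hσ', h₁, h₂⟩ := hflip σ hσ
  · exact ⟨-σ, hσ', by rwa [h₂]⟩
  · exact ⟨-σ, hσ', by rwa [h₁]⟩

theorem bhRel_cons_add_two_right {i : ZMod 4} {x : Fin m → ZMod 4} {u : Fin (m + 1) → ZMod 4} :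
    bhRel (m + 1) u (Fin.cons (i + 2) x) ↔ bhRel (m + 1) u (Fin.cons i x) := by
  have hflip : ∀ j σ : ZMod 4, (σ = 1 ∨ σ = -1) → (-σ = 1 ∨ -σ = -1) ∧
      (i + 2 = j + σ ↔ i = j + -σ) ∧ (i = j + σ ↔ i + 2 = j + -σ) := by
    revert i; decide
  rw [← Fin.cons_self_tail u, bhRel_cons_iff, bhRel_cons_iff]
  simp only [Fin.cons_inj]
  constructor <;> rintro ⟨σ, hσ, h⟩ <;> obtain ⟨hσ', h₁, h₂⟩ := hflip (u 0) σ hσ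
  · exact ⟨-σ, hσ', by simpa [h₁] using h⟩
  · exact ⟨-σ, hσ', by simpa [h₂] using h⟩

theorem BH_adj_cons_add_two_left {i : ZMod 4} {x : Fin m → ZMod 4} {v : Fin (m + 1) → ZMod 4} :
    (BH (m + 1)).Adj (Fin.cons (i + 2) x) v ↔ (BH (m + 1)).Adj (Fin.cons i x) v := by
  rw [BH_adj_iff, BH_adj_iff, bhRel_cons_add_two_left, bhRel_cons_add_two_right]

theorem BH_exists_isCycle_cons {i j : ZMod 4} {x y : Fin m → ZMod 4}
    (h : (BH (m + 1)).Adj (Fin.cons i x) (Fin.cons j y)) :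
    ∃ C : (BH (m + 1)).Walk (Fin.cons i x) (Fin.cons i x), C.IsCycle ∧
      C.support = [Fin.cons i x, Fin.cons j y, Fin.cons (i + 2) x, Fin.cons (j + 2) y,
        Fin.cons i x] := by
  have hne : ∀ k : ZMod 4, k ≠ k + 2 := by decide
  refine exists_isCycle_support_eq_of_adj h (BH_adj_cons_add_two_left.2 h).symm
    (BH_adj_cons_add_two_left.2 (BH_adj_cons_add_two_left.2 h.symm).symm)
    (BH_adj_cons_add_two_left.2 h.symm) ?_ ?_ <;> simp [Fin.cons_inj, hne]

end BalancedHypercube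

section HamiltonianCycles

variable {m : ℕ} {i : ZMod 4} {x : Fin m → ZMod 4}

-- Steps `4k, …, 4k + 3` visit `(i, γ k), (i + 1, γ k), (i + 2, γ (k + 1)), (i + 3, γ k)`.
def hamSeq₁ (i : ZMod 4) (x : Fin m → ZMod 4) (j : ℕ) : Fin (m + 1) → ZMod 4 :=
  Fin.cons (i + j) (x + gray4 m (j / 4 + if j % 4 = 2 then 1 else 0))

-- Steps `4k, …, 4k + 3` visit `(i, -γ k), (i - 1, -γ (k + 1)), (i - 2, -γ (k + 1)),
-- `(i - 3, -γ (k + 1))`.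
def hamSeq₂ (i : ZMod 4) (x : Fin m → ZMod 4) (j : ℕ) : Fin (m + 1) → ZMod 4 :=
  Fin.cons (i - j) (x - gray4 m (j / 4 + if j % 4 = 0 then 0 else 1))

theorem natCast_four_mul_add (k r : ℕ) : ((4 * k + r : ℕ) : ZMod 4) = r := by
  push_cast
  rw [show (4 : ZMod 4) = 0 from rfl, zero_mul, zero_add]

theorem hamSeq₁_four_mul_add (k : ℕ) {r : ℕ} (hr : r < 4 := by norm_num) :
    hamSeq₁ i x (4 * k + r) = Fin.cons (i + r) (x + gray4 m (k + if r = 2 then 1 else 0)) := by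
  rw [hamSeq₁, natCast_four_mul_add]
  simp [Nat.mul_add_div, Nat.div_eq_of_lt hr, Nat.mod_eq_of_lt hr]

theorem hamSeq₂_four_mul_add (k : ℕ) {r : ℕ} (hr : r < 4 := by norm_num) :
    hamSeq₂ i x (4 * k + r) = Fin.cons (i - r) (x - gray4 m (k + if r = 0 then 0 else 1)) := by
  rw [hamSeq₂, natCast_four_mul_add]
  simp [Nat.mul_add_div, Nat.div_eq_of_lt hr, Nat.mod_eq_of_lt hr]

theorem hamSeq₁_adj (hm : 0 < m) (hi : Odd i.val) (j : ℕ) :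
    (BH (m + 1)).Adj (hamSeq₁ i x j) (hamSeq₁ i x (j + 1)) := by
  obtain ⟨k, r, hr, rfl⟩ : ∃ k r, r < 4 ∧ j = 4 * k + r :=
    ⟨j / 4, j % 4, Nat.mod_lt _ (by norm_num), (Nat.div_add_mod j 4).symm⟩
  obtain ⟨c, hc⟩ := gray4_succ hm k
  have hi₁ : Even (i + 1).val := by revert i; decide
  have hi₃ : Even (i + 3).val := by revert i; decide
  have h₃ : ∀ a : ZMod 4, a + 3 + -1 = a + 2 ∧ a + 3 + 1 = a := by decide
  interval_cases r
  · rw [hamSeq₁_four_mul_add k (r := 0), hamSeq₁_four_mul_add k (r := 1)]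
    simpa using BH_adj_cons_inner (i := i) (Or.inl rfl) (x + gray4 m k)
  · rw [hamSeq₁_four_mul_add k (r := 1), hamSeq₁_four_mul_add k (r := 2)]
    simpa [hc, add_assoc, one_add_one_eq_two] using
      BH_adj_cons_add_single hi₁ (Or.inl rfl) (x + gray4 m k) c
  · rw [hamSeq₁_four_mul_add k (r := 2), hamSeq₁_four_mul_add k (r := 3)]
    simpa [hc, add_assoc, h₃ i] using
      (BH_adj_cons_add_single hi₃ (Or.inr rfl) (x + gray4 m k) c).symm
  · rw [hamSeq₁_four_mul_add k (r := 3), show 4 * k + 3 + 1 = 4 * (k + 1) + 0 by ring,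
      hamSeq₁_four_mul_add (k + 1) (r := 0)]
    simpa [hc, add_assoc, h₃ i] using BH_adj_cons_add_single hi₃ (Or.inl rfl) (x + gray4 m k) c

theorem hamSeq₂_adj (hm : 0 < m) (hi : Odd i.val) (j : ℕ) :
    (BH (m + 1)).Adj (hamSeq₂ i x j) (hamSeq₂ i x (j + 1)) := by
  obtain ⟨k, r, hr, rfl⟩ : ∃ k r, r < 4 ∧ j = 4 * k + r :=
    ⟨j / 4, j % 4, Nat.mod_lt _ (by norm_num), (Nat.div_add_mod j 4).symm⟩
  obtain ⟨c, hc⟩ := gray4_succ hm k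
  have hi' : ¬Even i.val := by revert i; decide
  have hsub : ∀ a : ZMod 4, a - 1 - 1 = a - 2 ∧ a - 2 - 1 = a - 3 ∧ a - 3 - 1 = a := by decide
  interval_cases r
  · rw [hamSeq₂_four_mul_add k (r := 0), hamSeq₂_four_mul_add k (r := 1)]
    simpa [hc, sub_sub, ← sub_eq_add_neg] using
      BH_adj_cons_sub_single hi' (Or.inr rfl) (x - gray4 m k) c
  · rw [hamSeq₂_four_mul_add k (r := 1), hamSeq₂_four_mul_add k (r := 2)]
    simpa [← sub_eq_add_neg, (hsub i).1] using
      BH_adj_cons_inner (i := i - 1) (Or.inr rfl) (x - gray4 m (k + 1))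
  · rw [hamSeq₂_four_mul_add k (r := 2), hamSeq₂_four_mul_add k (r := 3)]
    simpa [← sub_eq_add_neg, (hsub i).2.1] using
      BH_adj_cons_inner (i := i - 2) (Or.inr rfl) (x - gray4 m (k + 1))
  · rw [hamSeq₂_four_mul_add k (r := 3), show 4 * k + 3 + 1 = 4 * (k + 1) + 0 by ring,
      hamSeq₂_four_mul_add (k + 1) (r := 0)]
    simpa [← sub_eq_add_neg, (hsub i).2.2] using
      BH_adj_cons_inner (i := i - 3) (Or.inr rfl) (x - gray4 m (k + 1))

theorem hamSeq₁_eq_iff {j j' : ℕ} : hamSeq₁ i x j = hamSeq₁ i x j' ↔ j ≡ j' [MOD 4 ^ (m + 1)] := by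
  simp only [hamSeq₁, Fin.cons_inj, add_right_inj, gray4_eq_iff, ZMod.natCast_eq_natCast_iff,
    pow_succ', Nat.modEq_mul_iff_modEq_and_div_modEq]
  refine and_congr_right fun h => ?_
  rw [show j % 4 = j' % 4 from h]
  exact ⟨Nat.ModEq.add_right_cancel' _, Nat.ModEq.add_right _⟩

theorem hamSeq₂_eq_iff {j j' : ℕ} : hamSeq₂ i x j = hamSeq₂ i x j' ↔ j ≡ j' [MOD 4 ^ (m + 1)] := by
  simp only [hamSeq₂, Fin.cons_inj, sub_right_inj, gray4_eq_iff, ZMod.natCast_eq_natCast_iff,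
    pow_succ', Nat.modEq_mul_iff_modEq_and_div_modEq]
  refine and_congr_right fun h => ?_
  rw [show j % 4 = j' % 4 from h]
  exact ⟨Nat.ModEq.add_right_cancel' _, Nat.ModEq.add_right _⟩

theorem BH_exists_isHamiltonianCycle_map_range_isPrefix (f : ℕ → Fin (m + 1) → ZMod 4)
    {u : Fin (m + 1) → ZMod 4} (hu : f 0 = u) (hadj : ∀ j, (BH (m + 1)).Adj (f j) (f (j + 1)))
    (hf : ∀ j j', f j = f j' ↔ j ≡ j' [MOD 4 ^ (m + 1)]) {k : ℕ} (hk : k ≤ 4 ^ (m + 1) + 1) :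
    ∃ H : (BH (m + 1)).Walk u u, H.IsHamiltonianCycle ∧ (List.range k).map f <+: H.support := by
  have hcard : Fintype.card (Fin (m + 1) → ZMod 4) = 4 ^ (m + 1) := by simp
  have h4 : 4 ≤ 4 ^ (m + 1) := Nat.le_self_pow (by omega) 4
  obtain ⟨H, hH, hsupp⟩ := exists_isHamiltonianCycle_support_eq_map f hu hadj
    (hcard ▸ hf) (by omega)
  exact ⟨H, hH, hsupp ▸ hcard ▸ List.map_range_isPrefix_map_range f hk⟩

theorem exists_isHamiltonianCycle_hamSeq₁ (hm : 0 < m) (hi : Odd i.val) :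
    ∃ H : (BH (m + 1)).Walk (Fin.cons i x) (Fin.cons i x), H.IsHamiltonianCycle ∧
      [Fin.cons i x, Fin.cons (i + 1) x, Fin.cons (i + 2) (x + gray4 m 1), Fin.cons (i + 1 + 2) x,
        Fin.cons (i + 2 + 2) (x + gray4 m 1)] <+: H.support := by
  have h4 : 4 ≤ 4 ^ (m + 1) := Nat.le_self_pow (by omega) 4
  obtain ⟨H, hH, hP⟩ := BH_exists_isHamiltonianCycle_map_range_isPrefix (hamSeq₁ i x)
    (u := Fin.cons i x) (k := 5) (by simp [hamSeq₁, gray4_zero]) (hamSeq₁_adj hm hi)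
    (fun _ _ => hamSeq₁_eq_iff) (by omega)
  have h₅ : ∀ a : ZMod 4, a + 3 = a + 1 + 2 ∧ a + 4 = a + 2 + 2 := by decide
  refine ⟨H, hH, ?_⟩
  convert hP using 1
  simp [List.range_succ, hamSeq₁, gray4_zero, h₅]

theorem exists_isHamiltonianCycle_hamSeq₂ (hm : 0 < m) (hi : Odd i.val) :
    ∃ H : (BH (m + 1)).Walk (Fin.cons i x) (Fin.cons i x), H.IsHamiltonianCycle ∧
      [Fin.cons i x, Fin.cons (i - 1) (x - gray4 m 1), Fin.cons (i - 2) (x - gray4 m 1),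
        Fin.cons (i - 1 + 2) (x - gray4 m 1), Fin.cons (i - 2 + 2) (x - gray4 m 1)] <+:
        H.support := by
  have h4 : 4 ≤ 4 ^ (m + 1) := Nat.le_self_pow (by omega) 4
  obtain ⟨H, hH, hP⟩ := BH_exists_isHamiltonianCycle_map_range_isPrefix (hamSeq₂ i x)
    (u := Fin.cons i x) (k := 5) (by simp [hamSeq₂, gray4_zero]) (hamSeq₂_adj hm hi)
    (fun _ _ => hamSeq₂_eq_iff) (by omega)
  have h₅ : ∀ a : ZMod 4, a - 3 = a - 1 + 2 ∧ a - 4 = a - 2 + 2 := by decide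
  refine ⟨H, hH, ?_⟩
  convert hP using 1
  simp [List.range_succ, hamSeq₂, gray4_zero, h₅]

theorem symmetric_fourCycles_inter_eq_empty (hm : 0 < m) (i : ZMod 4) (x : Fin m → ZMod 4) :
    ({Fin.cons (i + 1) x, Fin.cons (i + 2) (x + gray4 m 1), Fin.cons (i + 1 + 2) x,
        Fin.cons (i + 2 + 2) (x + gray4 m 1)} : Set (Fin (m + 1) → ZMod 4)) ∩
      {Fin.cons (i - 1) (x - gray4 m 1), Fin.cons (i - 2) (x - gray4 m 1),
        Fin.cons (i - 1 + 2) (x - gray4 m 1), Fin.cons (i - 2 + 2) (x - gray4 m 1)} = ∅ := by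
  have hne : ∀ a : ZMod 4, a - 1 ≠ a ∧ a - 1 ≠ a + 1 := by decide
  ext v
  simp only [Set.mem_inter_iff, Set.mem_insert_iff, Set.mem_singleton_iff,
    Set.mem_empty_iff_false, iff_false, not_and]
  rintro h (rfl | rfl | rfl | rfl) <;> rcases h with h | h | h | h <;>
  · have := congrFun (Fin.cons_inj.1 h).2 ⟨0, hm⟩
    simp only [Pi.sub_apply, Pi.add_apply, gray4_one_apply_zero hm] at this
    first | exact (hne _).1 this | exact (hne _).2 this

end HamiltonianCycles

/-- For every black vertex `s` of `BH n` (`n ≥ 2`) there are two vertex-disjoint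
4-cycles `⟨a_t,b_t,c_t,d_t⟩` (`t = 1,2`), where `c_t`, `d_t` are the symmetric pairs
of `a_t`, `b_t`, and for each `t` some Hamiltonian cycle of `BH n` contains the
5-vertex path `⟨s,a_t,b_t,c_t,d_t⟩`. -/
theorem BH_five_path_lemma (n : ℕ) (hn : 2 ≤ n) (s : Fin n → ZMod 4)
    (hs : IsBlack (by omega) s) :
    ∃ a₁ b₁ c₁ d₁ a₂ b₂ c₂ d₂ : Fin n → ZMod 4,
      (∃ C₁ : (BH n).Walk a₁ a₁, C₁.IsCycle ∧ C₁.support = [a₁, b₁, c₁, d₁, a₁]) ∧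
      (∃ C₂ : (BH n).Walk a₂ a₂, C₂.IsCycle ∧ C₂.support = [a₂, b₂, c₂, d₂, a₂]) ∧
      ({a₁, b₁, c₁, d₁} : Set (Fin n → ZMod 4)) ∩ {a₂, b₂, c₂, d₂} = ∅ ∧
      c₁ = Function.update a₁ ⟨0, by omega⟩ (a₁ ⟨0, by omega⟩ + 2) ∧
      d₁ = Function.update b₁ ⟨0, by omega⟩ (b₁ ⟨0, by omega⟩ + 2) ∧
      c₂ = Function.update a₂ ⟨0, by omega⟩ (a₂ ⟨0, by omega⟩ + 2) ∧
      d₂ = Function.update b₂ ⟨0, by omega⟩ (b₂ ⟨0, by omega⟩ + 2) ∧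
      (∃ H₁ : (BH n).Walk s s, H₁.IsHamiltonianCycle ∧
        [s, a₁, b₁, c₁, d₁] <+: H₁.support) ∧
      (∃ H₂ : (BH n).Walk s s, H₂.IsHamiltonianCycle ∧
        [s, a₂, b₂, c₂, d₂] <+: H₂.support) := by
  obtain ⟨m, rfl⟩ : ∃ m, n = m + 1 := ⟨n - 1, by omega⟩
  obtain ⟨i, x, rfl⟩ : ∃ i x, s = Fin.cons i x := ⟨_, _, (Fin.cons_self_tail s).symm⟩
  have hm : 0 < m := by omega
  have hi : Odd i.val := hs
  obtain ⟨H₁, hH₁, hP₁⟩ := exists_isHamiltonianCycle_hamSeq₁ (x := x) hm hi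
  obtain ⟨H₂, hH₂, hP₂⟩ := exists_isHamiltonianCycle_hamSeq₂ (x := x) hm hi
  refine ⟨_, _, _, _, _, _, _, _, BH_exists_isCycle_cons (Walk.adj_of_cons_cons_cons_isPrefix hP₁),
    BH_exists_isCycle_cons (Walk.adj_of_cons_cons_cons_isPrefix hP₂),
    symmetric_fourCycles_inter_eq_empty hm i x,
    ?_, ?_, ?_, ?_, ⟨H₁, hH₁, hP₁⟩, ⟨H₂, hH₂, hP₂⟩⟩ <;> simp [Fin.update_cons_zero]
end

section
/- In BH_2, let s_1=(1,0), s_2=(3,0), s_3=(1,2), t_1=(0,0), t_2=(2,0), t_3=(0,1). Then there do NOT exist three pairwise vertex-disjoint paths P_j from s_j to t_j (j=1,2,3) whose vertex sets together cover all 16 vertices of BH_2. Hence BH_2 does not admit a paired 3-disjoint path cover for all choices of sources and sinks. -/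
open SimpleGraph

/-- The vertex `(a, b)` of `BH 2`. -/
def vtx (a b : ZMod 4) : Fin 2 → ZMod 4 := ![a, b]

/-! In `BH 2` the black vertices `(1,1)` and `(3,1)` have the same four neighbours: the three
sinks `(0,0)`, `(2,0)`, `(0,1)` and the vertex `(2,1)`. Orient every path of a cover from its
source to its sink. Neither vertex is a source, so each is entered along a dart from one of its
neighbours, and that neighbour is not a sink, since the sink of a path is its last vertex and the
other sinks lie on other paths. Hence both are entered from `(2,1)`, which has only one successor
in the cover. -/

namespace SimpleGraph

variable {V : Type*} {G : SimpleGraph V}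

namespace Walk

variable {u₁ v₁ u₂ v₂ u₃ v₃ : V} (p₁ : G.Walk u₁ v₁) (p₂ : G.Walk u₂ v₂) (p₃ : G.Walk u₃ v₃)

theorem perm_map_fst_darts_append_three :
    ((p₁.darts ++ p₂.darts ++ p₃.darts).map (·.fst) ++ [v₁, v₂, v₃]).Perm
      (p₁.support ++ p₂.support ++ p₃.support) := by
  classical
  rw [← p₁.map_fst_darts_append, ← p₂.map_fst_darts_append, ← p₃.map_fst_darts_append]
  refine List.perm_iff_count.2 fun x => ?_
  simp only [List.map_append, List.count_append, List.count_cons, List.count_nil]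
  omega

theorem perm_map_snd_darts_append_three :
    ([u₁, u₂, u₃] ++ (p₁.darts ++ p₂.darts ++ p₃.darts).map (·.snd)).Perm
      (p₁.support ++ p₂.support ++ p₃.support) := by
  classical
  rw [← p₁.cons_map_snd_darts, ← p₂.cons_map_snd_darts, ← p₃.cons_map_snd_darts]
  refine List.perm_iff_count.2 fun x => ?_
  simp only [List.map_append, List.count_append, List.count_cons, List.count_nil]
  omega

end Walk

/-- Two vertices whose neighbours outside `T` all equal `w` cannot both be heads of darts of `D`
when every vertex is the tail of at most one dart of `D` and no vertex of `T` is a tail. -/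
theorem notMem_map_snd_of_forced_predecessor {D : List G.Dart} {T : List V}
    (hD : (D.map (·.fst) ++ T).Nodup) {w b₁ b₂ : V} (hb : b₁ ≠ b₂)
    (hN : ∀ b ∈ [b₁, b₂], ∀ x, G.Adj x b → x ∈ T ∨ x = w) (h₁ : b₁ ∈ D.map (·.snd)) :
    b₂ ∉ D.map (·.snd) := by
  rw [List.nodup_append] at hD
  have pred : ∀ b ∈ [b₁, b₂], b ∈ D.map (·.snd) → ∃ d ∈ D, d.fst = w ∧ d.snd = b := by
    rintro b hb' hbD
    obtain ⟨d, hd, rfl⟩ := List.mem_map.1 hbD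
    refine ⟨d, hd, ?_, rfl⟩
    rcases hN _ hb' d.fst d.adj with hT | hw
    · exact absurd rfl (hD.2.2 _ (List.mem_map_of_mem hd) _ hT)
    · exact hw
  intro h₂
  obtain ⟨d₁, hd₁, hw₁, rfl⟩ := pred b₁ (by simp) h₁
  obtain ⟨d₂, hd₂, hw₂, rfl⟩ := pred _ (by simp) h₂
  exact hb (congrArg (·.snd) (List.inj_on_of_nodup_map hD.1 hd₁ hd₂ (hw₁.trans hw₂.symm)))

end SimpleGraph

instance (n : ℕ) (u v : Fin n → ZMod 4) : Decidable (bhRel n u v) := by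
  unfold bhRel; infer_instance

instance (n : ℕ) : DecidableRel (BH n).Adj := fun u v =>
  decidable_of_iff (u ≠ v ∧ (bhRel n u v ∨ bhRel n v u)) (fromRel_adj _ u v).symm

theorem BH_two_adj_one_one_or_three_one :
    ∀ b ∈ [vtx 1 1, vtx 3 1], ∀ x, (BH 2).Adj x b →
      x ∈ [vtx 0 0, vtx 2 0, vtx 0 1] ∨ x = vtx 2 1 := by
  decide

/-- For `s1=(1,0)`, `s2=(3,0)`, `s3=(1,2)`, `t1=(0,0)`, `t2=(2,0)`, `t3=(0,1)`,
`BH 2` has no paired 3-disjoint path cover joining `s_j` to `t_j`. -/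
theorem BH_two_no_three_DPC :
    ¬ ∃ (p1 : (BH 2).Walk (vtx 1 0) (vtx 0 0)) (p2 : (BH 2).Walk (vtx 3 0) (vtx 2 0))
        (p3 : (BH 2).Walk (vtx 1 2) (vtx 0 1)),
      p1.IsPath ∧ p2.IsPath ∧ p3.IsPath ∧
      p1.support.Disjoint p2.support ∧ p1.support.Disjoint p3.support ∧
      p2.support.Disjoint p3.support ∧
      ∀ w : Fin 2 → ZMod 4, w ∈ p1.support ∨ w ∈ p2.support ∨ w ∈ p3.support := by
  rintro ⟨p1, p2, p3, hp1, hp2, hp3, h12, h13, h23, hcover⟩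
  have hsupport : (p1.support ++ p2.support ++ p3.support).Nodup :=
    (hp1.support_nodup.append hp2.support_nodup h12).append hp3.support_nodup
      (List.disjoint_append_left.2 ⟨h13, h23⟩)
  have hfst := (Walk.perm_map_fst_darts_append_three p1 p2 p3).nodup_iff.2 hsupport
  have hsnd : ∀ b, b ∉ [vtx 1 0, vtx 3 0, vtx 1 2] →
      b ∈ (p1.darts ++ p2.darts ++ p3.darts).map (·.snd) := fun b hb =>
    (List.mem_append.1 ((Walk.perm_map_snd_darts_append_three p1 p2 p3).mem_iff.2
      (by simpa only [List.mem_append, or_assoc] using hcover b))).resolve_left hb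
  exact notMem_map_snd_of_forced_predecessor hfst (by decide) BH_two_adj_one_one_or_three_one
    (hsnd _ (by decide)) (hsnd _ (by decide))
end

section
/- For n ≥ 2 and any j ∈ {1,...,n-1}, deleting all j-dimensional edges from BH_n disconnects it into exactly four components BH_{n-1}^{j,0}, BH_{n-1}^{j,1}, BH_{n-1}^{j,2}, BH_{n-1}^{j,3} (the subgraphs induced by vertices whose j-th coordinate equals 0,1,2,3 respectively), and each such component is isomorphic to BH_{n-1}. -/
open SimpleGraph

/-! ### Auxiliary definitions and lemmas -/

lemma eps_cases (a : ℕ) : (if Even a then (1 : ZMod 4) else -1) = 1 ∨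
    (if Even a then (1 : ZMod 4) else -1) = -1 := by
  split_ifs <;> simp

lemma eps_ne_zero (a : ℕ) : (if Even a then (1 : ZMod 4) else -1) ≠ 0 := by
  rcases eps_cases a with h | h <;> rw [h] <;> decide

lemma zmod4_cast_val (x : ZMod 4) : ((x.val : ℕ) : ZMod 4) = x := by
  rw [ZMod.natCast_val, ZMod.cast_id]

/-- Restriction of a vertex along the `J`-th coordinate. -/
def bhRes {m : ℕ} (J : Fin (m+1)) (u : Fin (m+1) → ZMod 4) : Fin m → ZMod 4 :=
  fun t => u (J.succAbove t)

lemma bhRes_update {m : ℕ} (J : Fin (m+1)) (u : Fin (m+1) → ZMod 4) (t : Fin m) (c : ZMod 4) :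
    bhRes J (Function.update u (J.succAbove t) c) = Function.update (bhRes J u) t c := by
  funext x
  simp [bhRes, Function.update_apply, Fin.succAbove_right_injective.eq_iff]

lemma bhRes_inj {m : ℕ} (J : Fin (m+1)) {u w : Fin (m+1) → ZMod 4}
    (hJ : u J = w J) (h : bhRes J u = bhRes J w) : u = w := by
  funext x
  rcases eq_or_ne x J with rfl | hx
  · exact hJ
  · obtain ⟨t, rfl⟩ := Fin.exists_succAbove_eq hx
    exact congrFun h t

lemma bhRes_succAbove_zero {m : ℕ} (hm : 0 < m) (J : Fin (m+1)) (hJ : (J : ℕ) ≠ 0) :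
    J.succAbove ⟨0, hm⟩ = ⟨0, Nat.succ_pos m⟩ := by
  rw [Fin.succAbove_of_castSucc_lt]
  · rfl
  · exact Nat.pos_of_ne_zero hJ

lemma bhRel_restrict {m : ℕ} (hm : 0 < m) (J : Fin (m+1)) (hJ : (J : ℕ) ≠ 0)
    {u w : Fin (m+1) → ZMod 4} (huw : u J = w J) :
    bhRel (m+1) u w ↔ bhRel m (bhRes J u) (bhRes J w) := by
  have hz1 : J.succAbove ⟨0, hm⟩ = ⟨0, Nat.succ_pos m⟩ := bhRes_succAbove_zero hm J hJ
  have hJz : J ≠ ⟨0, Nat.succ_pos m⟩ := by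
    intro h; exact hJ (by simp [h])
  have hres0 : bhRes J u ⟨0, hm⟩ = u ⟨0, Nat.succ_pos m⟩ := by
    rw [bhRes, hz1]
  constructor
  · rintro ⟨hn, s, hs, h | ⟨i, hi, h⟩⟩
    · refine ⟨hm, s, hs, Or.inl ?_⟩
      rw [h, ← hz1, bhRes_update]
      simp [bhRes, hz1]
    · rcases eq_or_ne i J with rfl | hiJ
      · exfalso
        have : w i = u i + (if Even (u ⟨0, hn⟩).val then 1 else -1) := by
          rw [h, Function.update_self]
        rw [← huw] at this
        have := left_eq_add.mp this
        exact eps_ne_zero _ this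
      · obtain ⟨t, rfl⟩ := Fin.exists_succAbove_eq hiJ
        have ht : t ≠ ⟨0, hm⟩ := by
          rintro rfl; exact hi (by rw [hz1])
        refine ⟨hm, s, hs, Or.inr ⟨t, ht, ?_⟩⟩
        rw [h, ← hz1, bhRes_update, bhRes_update]
        simp [bhRes, hz1]
  · rintro ⟨hm', s, hs, h | ⟨t, ht, h⟩⟩
    · refine ⟨Nat.succ_pos m, s, hs, Or.inl ?_⟩
      refine bhRes_inj J ?_ ?_
      · rw [Function.update_of_ne hJz]; exact huw.symm
      · rw [h, ← hz1, bhRes_update]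
        simp [bhRes, hz1]
    · refine ⟨Nat.succ_pos m, s, hs, Or.inr ⟨J.succAbove t, ?_, ?_⟩⟩
      · rw [← hz1]
        exact fun hh => ht (Fin.succAbove_right_injective hh)
      · refine bhRes_inj J ?_ ?_
        · rw [Function.update_of_ne (Fin.succAbove_ne J t).symm,
            Function.update_of_ne hJz]
          exact huw.symm
        · rw [h, ← hz1, bhRes_update, bhRes_update]
          simp [bhRes, hz1]

@[reducible] def bz (m : ℕ) : Fin (m+1) := ⟨0, Nat.succ_pos m⟩

/-- The balanced hypercube with all `J`-dimensional edges deleted. -/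
def bhG (m : ℕ) (J : Fin (m+1)) : SimpleGraph (Fin (m+1) → ZMod 4) :=
  (BH (m+1)).deleteEdges {e | ¬ (Sym2.map (fun x => x J) e).IsDiag}

lemma bhG_adj {m : ℕ} {J : Fin (m+1)} {u w : Fin (m+1) → ZMod 4} :
    (bhG m J).Adj u w ↔
      (u ≠ w ∧ (bhRel (m+1) u w ∨ bhRel (m+1) w u)) ∧ u J = w J := by
  simp only [bhG, BH, deleteEdges_adj, fromRel_adj, Set.mem_setOf_eq, Sym2.map_pair_eq,
    Sym2.mk_isDiag_iff, not_not]

section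
variable {m : ℕ} {J : Fin (m+1)} (hJ : (J : ℕ) ≠ 0)

include hJ

lemma hJz1 : J ≠ bz m := fun h => hJ (by simp [h, bz])

lemma adj_step0 (u : Fin (m+1) → ZMod 4) {s : ZMod 4} (hs : s = 1 ∨ s = -1) :
    (bhG m J).Adj u (Function.update u (bz m) (u (bz m) + s)) := by
  rw [bhG_adj]
  refine ⟨⟨?_, Or.inl ⟨Nat.succ_pos m, s, hs, Or.inl rfl⟩⟩, ?_⟩
  · intro h
    have := congrFun h (bz m)
    rw [Function.update_self] at this
    have hs0 := (left_eq_add.mp this)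
    rcases hs with h1 | h1 <;> rw [h1] at hs0 <;> exact absurd hs0 (by decide)
  · rw [Function.update_of_ne (hJz1 hJ)]

lemma reach_update0 (u : Fin (m+1) → ZMod 4) (c : ZMod 4) :
    (bhG m J).Reachable u (Function.update u (bz m) c) := by
  have key : ∀ k : ℕ,
      (bhG m J).Reachable u (Function.update u (bz m) (u (bz m) + (k : ZMod 4))) := by
    intro k
    induction k with
    | zero => rw [Nat.cast_zero, add_zero, Function.update_eq_self]
    | succ k ih =>
      have h := adj_step0 hJ (Function.update u (bz m) (u (bz m) + (k : ZMod 4))) (Or.inl rfl)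
      rw [Function.update_idem, Function.update_self] at h
      have e : ((k+1 : ℕ) : ZMod 4) = (k : ZMod 4) + 1 := by push_cast; ring
      rw [e, ← add_assoc]
      exact ih.trans h.reachable
  have := key (c - u (bz m)).val
  rwa [zmod4_cast_val, add_sub_cancel] at this

lemma reach_stepi (u : Fin (m+1) → ZMod 4) (i : Fin (m+1)) (hi1 : i ≠ bz m) (hiJ : i ≠ J) :
    (bhG m J).Reachable u
      (Function.update u i (u i + (if Even (u (bz m)).val then 1 else -1))) := by
  set ε := (if Even (u (bz m)).val then (1 : ZMod 4) else -1) with hε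
  set v1 := Function.update (Function.update u (bz m) (u (bz m) + 1)) i (u i + ε) with hv1
  have hadj1 : (bhG m J).Adj u v1 := by
    rw [bhG_adj]
    refine ⟨⟨?_, Or.inl ⟨Nat.succ_pos m, 1, Or.inl rfl, Or.inr ⟨i, hi1, rfl⟩⟩⟩, ?_⟩
    · intro h
      have := congrFun h i
      rw [hv1, Function.update_self] at this
      exact eps_ne_zero _ (left_eq_add.mp this)
    · rw [hv1, Function.update_of_ne hiJ.symm, Function.update_of_ne (hJz1 hJ)]
  have hv1z : v1 (bz m) = u (bz m) + 1 := by
    rw [hv1, Function.update_of_ne hi1.symm, Function.update_self]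
  have h2 : Function.update v1 (bz m) (v1 (bz m) + (-1)) = Function.update u i (u i + ε) := by
    funext x
    rcases eq_or_ne x (bz m) with rfl | hx1
    · rw [Function.update_self, Function.update_of_ne hi1.symm, hv1z]
      ring
    · rw [Function.update_of_ne hx1]
      rcases eq_or_ne x i with rfl | hxi
      · rw [hv1, Function.update_self, Function.update_self]
      · rw [hv1, Function.update_of_ne hxi, Function.update_of_ne hx1,
          Function.update_of_ne hxi]
  have hadj2 : (bhG m J).Adj v1 (Function.update u i (u i + ε)) := by
    rw [bhG_adj]
    refine ⟨⟨?_, Or.inl ⟨Nat.succ_pos m, -1, Or.inr rfl, Or.inl h2.symm⟩⟩, ?_⟩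
    · intro h
      have := congrFun h (bz m)
      rw [hv1z, Function.update_of_ne hi1.symm] at this
      exact absurd (left_eq_add.mp this.symm) (by decide)
    · rw [hv1, Function.update_of_ne hiJ.symm, Function.update_of_ne (hJz1 hJ),
        Function.update_of_ne hiJ.symm]
  exact hadj1.reachable.trans hadj2.reachable

lemma reach_updatei (u : Fin (m+1) → ZMod 4) (i : Fin (m+1)) (hi1 : i ≠ bz m) (hiJ : i ≠ J)
    (c : ZMod 4) : (bhG m J).Reachable u (Function.update u i c) := by
  set ε := (if Even (u (bz m)).val then (1 : ZMod 4) else -1) with hε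
  have hεε : ε * ε = 1 := by
    rcases eps_cases (u (bz m)).val with h | h <;> rw [hε, h] <;> decide
  have key : ∀ k : ℕ,
      (bhG m J).Reachable u (Function.update u i (u i + (k : ZMod 4) * ε)) := by
    intro k
    induction k with
    | zero => rw [Nat.cast_zero, zero_mul, add_zero, Function.update_eq_self]
    | succ k ih =>
      refine ih.trans ?_
      have h := reach_stepi hJ (Function.update u i (u i + (k : ZMod 4) * ε)) i hi1 hiJ
      rw [Function.update_of_ne hi1.symm, ← hε, Function.update_idem,
        Function.update_self] at h
      have e : ((k+1 : ℕ) : ZMod 4) * ε = (k : ZMod 4) * ε + ε := by push_cast; ring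
      rw [e, ← add_assoc]
      exact h
  have := key ((c - u i) * ε).val
  rwa [zmod4_cast_val, mul_assoc, hεε, mul_one, add_sub_cancel] at this

lemma reach_update (u : Fin (m+1) → ZMod 4) (i : Fin (m+1)) (hiJ : i ≠ J) (c : ZMod 4) :
    (bhG m J).Reachable u (Function.update u i c) := by
  rcases eq_or_ne i (bz m) with rfl | hi1
  · exact reach_update0 hJ u c
  · exact reach_updatei hJ u i hi1 hiJ c

lemma bhG_reachable_iff (u w : Fin (m+1) → ZMod 4) :
    (bhG m J).Reachable u w ↔ u J = w J := by
  constructor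
  · intro h
    obtain ⟨p⟩ := h
    induction p with
    | nil => rfl
    | cons h _ ih =>
      rw [bhG_adj] at h
      exact h.2.trans ih
  · have key : ∀ k : ℕ, ∀ u w : Fin (m+1) → ZMod 4, u J = w J →
        (∀ x : Fin (m+1), k ≤ (x : ℕ) → u x = w x) → (bhG m J).Reachable u w := by
      intro k
      induction k with
      | zero =>
        intro u w _ hag
        have : u = w := funext fun x => hag x (Nat.zero_le _)
        rw [this]
      | succ k ih =>
        intro u w huw hag
        by_cases hk : k < m + 1
        · set x : Fin (m+1) := ⟨k, hk⟩ with hx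
          rcases eq_or_ne x J with hxJ | hxJ
          · refine ih u w huw (fun y hy => ?_)
            rcases eq_or_ne (y : ℕ) k with hyk | hyk
            · have : y = x := Fin.ext hyk
              rw [this, hxJ]; exact huw
            · exact hag y (by omega)
          · refine (reach_update hJ u x hxJ (w x)).trans ?_
            refine ih _ w ?_ (fun y hy => ?_)
            · rw [Function.update_of_ne (fun h => hxJ h.symm : J ≠ x)]
              exact huw
            · rcases eq_or_ne y x with rfl | hyx
              · rw [Function.update_self]
              · rw [Function.update_of_ne hyx]
                rcases Nat.lt_or_ge (y : ℕ) (k+1) with h' | h'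
                · exact absurd (Fin.ext (show (y : ℕ) = k by omega)) hyx
                · exact hag y h'
        · exact ih u w huw (fun y hy => absurd y.isLt (by omega))
    intro huw
    exact key (m+1) u w huw (fun x hx => absurd x.isLt (by omega))

lemma BH_adj_restrict (hm : 0 < m) {u w : Fin (m+1) → ZMod 4} (huw : u J = w J) :
    (BH m).Adj (bhRes J u) (bhRes J w) ↔ (BH (m+1)).Adj u w := by
  rw [BH, BH, fromRel_adj, fromRel_adj, ← bhRel_restrict hm J hJ huw,
    ← bhRel_restrict hm J hJ huw.symm]
  refine and_congr (not_congr ⟨fun h => bhRes_inj J huw h, fun h => by rw [h]⟩) Iff.rfl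

end

/-- For `1 ≤ j ≤ n-1`, deleting all `j`-dimensional edges of `BH n` leaves exactly
four connected components, given by the value of the `j`-th coordinate, and each
component (as an induced subgraph) is isomorphic to `BH (n-1)`. -/
theorem BH_split_along_dimension (n j : ℕ) (h1 : 1 ≤ j) (h2 : j < n) :
    (∀ u w : Fin n → ZMod 4,
        ((BH n).deleteEdges
            {e : Sym2 (Fin n → ZMod 4) |
              ¬ (Sym2.map (fun x => x ⟨j, h2⟩) e).IsDiag}).Reachable u w ↔
          u ⟨j, h2⟩ = w ⟨j, h2⟩) ∧
    ∀ i : ZMod 4,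
      Nonempty (((BH n).induce {u : Fin n → ZMod 4 | u ⟨j, h2⟩ = i}) ≃g BH (n - 1)) := by
  obtain ⟨m, rfl⟩ : ∃ m, n = m + 1 := ⟨n - 1, by omega⟩
  have hm : 0 < m := by omega
  set J : Fin (m+1) := ⟨j, h2⟩ with hJdef
  have hJ : (J : ℕ) ≠ 0 := by simp [hJdef]; omega
  constructor
  · intro u w
    exact bhG_reachable_iff hJ u w
  · intro i
    show Nonempty (((BH (m+1)).induce {u : Fin (m+1) → ZMod 4 | u J = i}) ≃g BH m)
    refine ⟨⟨⟨fun u => bhRes J u.1,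
      fun v => ⟨Fin.insertNth (α := fun _ => ZMod 4) J i v,
        Fin.insertNth_apply_same (α := fun _ => ZMod 4) J i v⟩, ?_, ?_⟩, ?_⟩⟩
    · intro u
      refine Subtype.ext (bhRes_inj J ?_ ?_)
      · rw [show (⟨J.insertNth i (bhRes J u.1), _⟩ : {u : Fin (m+1) → ZMod 4 // u J = i}).1 J =
            i from Fin.insertNth_apply_same (α := fun _ => ZMod 4) J i _]
        exact u.2.symm
      · funext t
        exact Fin.insertNth_apply_succAbove (α := fun _ => ZMod 4) J i _ t
    · intro v
      funext t
      exact Fin.insertNth_apply_succAbove (α := fun _ => ZMod 4) J i v t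
    · intro a b
      have huw : a.1 J = b.1 J := a.2.trans b.2.symm
      exact (BH_adj_restrict hJ hm huw).trans Iff.rfl
end
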